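/- arXiv:2504.04846 — 7 statements merged into one kernel-verified Lean document; each statement's English description precedes it below -/
import Mathlib

section
/- Let F be a differential field of characteristic zero with field of constants C, and let F(x) be the rational function field over F with the derivation extended by x' = g for some g ∈ F. Then the field of constants of F(x) equals C if and only if there is no f ∈ F with f' = g. -/
/-!
Write a constant `h = p / q` of `F(x)` in lowest terms with `q` monic. The derivation maps `F[x]`
into itself, and `p′ q = p q′` forces `q ∣ q′`; as `q′` has lower degree, `q′ = 0`. A nonconstant
polynomial `a xᵐ + b xᵐ⁻¹ + ⋯` with zero derivative has `a′ = 0` and `b′ + m a g = 0`, so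
`g = (-b / (m a))′`. Hence if `g` has no antiderivative, `q = 1` and `p` is a constant of `F`.
Conversely, if `f′ = g` then `x - f` is a constant outside `F`.
-/

open Polynomial Differential
open scoped Differential

def Derivation.ofAddMul {R : Type*} [CommRing R] (D : R → R)
    (hadd : ∀ a b, D (a + b) = D a + D b) (hmul : ∀ a b, D (a * b) = a * D b + D a * b) :
    Derivation ℤ R R :=
  Derivation.mk' (AddMonoidHom.mk' D hadd).toIntLinearMap fun a b => by
    simp [hmul, smul_eq_mul, mul_comm]

theorem RatFunc.X_sub_algebraMap_notMem_range {F : Type*} [Field F] (f : F) :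
    RatFunc.X - algebraMap F (RatFunc F) f ∉ (algebraMap F (RatFunc F)).range := by
  rintro ⟨c, hc⟩
  apply X_ne_C (c + f)
  apply RatFunc.algebraMap_injective F
  rw [RatFunc.algebraMap_X, RatFunc.algebraMap_C, ← RatFunc.algebraMap_eq_C, map_add, hc,
    sub_add_cancel]

namespace Differential

variable {F : Type*} [Field F] [Differential F]

lemma coeff_implicitDeriv_C (g : F) (p : F[X]) (n : ℕ) :
    (implicitDeriv (C g) p).coeff n = (p.coeff n)′ + g * (derivative p).coeff n := by
  simp [implicitDeriv, coeff_C_mul]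

lemma degree_implicitDeriv_C_lt (g : F) {p : F[X]} (hp : p.Monic) :
    (implicitDeriv (C g) p).degree < p.degree := by
  rw [degree_eq_natDegree hp.ne_zero, degree_lt_iff_coeff_zero]
  intro m hm
  rw [coeff_implicitDeriv_C, coeff_derivative,
    coeff_eq_zero_of_natDegree_lt (Nat.lt_succ_of_le hm)]
  rcases hm.eq_or_lt with h | h
  · simp [← h, hp.coeff_natDegree]
  · simp [coeff_eq_zero_of_natDegree_lt h]

lemma exists_deriv_eq_of_implicitDeriv_C_eq_zero [CharZero F] {g : F} {p : F[X]}
    (hp : implicitDeriv (C g) p = 0) (hdeg : p.natDegree ≠ 0) : ∃ f : F, f′ = g := by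
  have hp0 : p ≠ 0 := by rintro rfl; exact hdeg natDegree_zero
  set m := p.natDegree
  set a := p.coeff m
  set b := p.coeff (m - 1)
  have hcoeff (n : ℕ) : (p.coeff n)′ + g * (p.coeff (n + 1) * (n + 1)) = 0 := by
    simpa [coeff_implicitDeriv_C, coeff_derivative] using congr(($hp).coeff n)
  have ha : a′ = 0 := by
    simpa [coeff_eq_zero_of_natDegree_lt (Nat.lt_succ_self m)] using hcoeff m
  have hb : b′ + g * (a * m) = 0 := by
    have := hcoeff (m - 1)
    rwa [Nat.sub_add_cancel (Nat.one_le_iff_ne_zero.mpr hdeg), ← Nat.cast_add_one,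
      Nat.sub_add_cancel (Nat.one_le_iff_ne_zero.mpr hdeg)] at this
  have ham : a * m ≠ 0 := mul_ne_zero (leadingCoeff_ne_zero.mpr hp0)
    (Nat.cast_ne_zero.mpr hdeg)
  refine ⟨-(b / (a * m)), ?_⟩
  rw [map_neg, Derivation.leibniz_div_const _ _ _ (by simp [ha]), eq_neg_of_add_eq_zero_left hb,
    smul_eq_mul, mul_neg, neg_neg, mul_comm g, inv_mul_cancel_left₀ ham]

lemma exists_eq_C_of_implicitDeriv_C_eq_zero [CharZero F] {g : F} (hg : ¬∃ f : F, f′ = g)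
    {p : F[X]} (hp : implicitDeriv (C g) p = 0) : ∃ c : F, c′ = 0 ∧ p = C c := by
  obtain ⟨c, rfl⟩ := natDegree_eq_zero.mp <|
    not_not.mp fun hdeg => hg (exists_deriv_eq_of_implicitDeriv_C_eq_zero hp hdeg)
  exact ⟨c, by simpa using hp, rfl⟩

lemma setOf_deriv_eq_zero_eq_image_iff {A B : Type*} [CommRing A] [CommRing B] [Algebra A B]
    [Differential A] [Differential B] [DifferentialAlgebra A B]
    (hinj : Function.Injective (algebraMap A B)) :
    {b : B | b′ = 0} = algebraMap A B '' {a : A | a′ = 0} ↔ ContainConstants A B := by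
  refine ⟨fun h => ⟨fun {b} hb => ?_⟩, fun _ => Set.ext fun b => ⟨fun hb => ?_, ?_⟩⟩
  · obtain ⟨a, -, rfl⟩ := h.subset hb
    exact ⟨a, rfl⟩
  · obtain ⟨a, rfl⟩ := mem_range_of_deriv_eq_zero A hb
    refine ⟨a, hinj ?_, rfl⟩
    simpa [← deriv_algebraMap] using hb
  · rintro ⟨a, ha, rfl⟩
    rw [Set.mem_ofPred_eq, deriv_algebraMap, ha, map_zero]

section RatFunc

variable [Differential (RatFunc F)] [DifferentialAlgebra F (RatFunc F)] {g : F}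

lemma deriv_algebraMap_polynomial (hX : (RatFunc.X : RatFunc F)′ = algebraMap F _ g)
    (p : F[X]) :
    (algebraMap F[X] (RatFunc F) p)′ = algebraMap F[X] (RatFunc F) (implicitDeriv (C g) p) := by
  simpa [RatFunc.aeval_X_left_eq_algebraMap] using
    deriv_aeval_eq_implicitDeriv (RatFunc.X : RatFunc F) (C g) (by simpa using hX) p

lemma containConstants_ratFunc [CharZero F] (hX : (RatFunc.X : RatFunc F)′ = algebraMap F _ g)
    (hg : ¬∃ f : F, f′ = g) : ContainConstants F (RatFunc F) := by
  refine ⟨fun {h} hh => ?_⟩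
  have hD := deriv_algebraMap_polynomial hX
  have hfrac : h * algebraMap _ _ h.denom = algebraMap _ _ h.num :=
    (eq_div_iff (RatFunc.algebraMap_ne_zero h.denom_ne_zero)).mp (RatFunc.num_div_denom h).symm
  have hcross : h.num * implicitDeriv (C g) h.denom = h.denom * implicitDeriv (C g) h.num := by
    apply RatFunc.algebraMap_injective F
    have := congr($hfrac′)
    simp only [Derivation.leibniz, hh, smul_eq_mul, mul_zero, add_zero, hD] at this
    rw [map_mul, map_mul, ← hfrac, ← this]
    ring
  -- `denom` is coprime to `num`, so it divides `denom′`, which has lower degree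
  have hdenom' : implicitDeriv (C g) h.denom = 0 :=
    eq_zero_of_dvd_of_degree_lt
      ((RatFunc.isCoprime_num_denom h).symm.dvd_of_dvd_mul_left ⟨_, hcross⟩)
      (degree_implicitDeriv_C_lt g (RatFunc.monic_denom h))
  have hdenom : h.denom = 1 := by
    obtain ⟨c, -, hc⟩ := exists_eq_C_of_implicitDeriv_C_eq_zero hg hdenom'
    exact (RatFunc.monic_denom h).natDegree_eq_zero.mp (by rw [hc, natDegree_C])
  obtain ⟨c, hc, hnum⟩ := exists_eq_C_of_implicitDeriv_C_eq_zero hg (p := h.num) <| by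
    simpa [hdenom, hdenom'] using hcross.symm
  refine ⟨c, ?_⟩
  rw [← mul_one h, ← map_one (algebraMap F[X] _), ← hdenom, hfrac, hnum, RatFunc.algebraMap_C,
    RatFunc.algebraMap_eq_C]

theorem containConstants_ratFunc_iff [CharZero F]
    (hX : (RatFunc.X : RatFunc F)′ = algebraMap F _ g) :
    ContainConstants F (RatFunc F) ↔ ¬∃ f : F, f′ = g := by
  refine ⟨fun _ ⟨f, hf⟩ => RatFunc.X_sub_algebraMap_notMem_range f ?_,
    containConstants_ratFunc hX⟩
  exact mem_range_of_deriv_eq_zero F (by rw [map_sub, hX, deriv_algebraMap, hf, sub_self])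

end RatFunc

end Differential

/-- For a differential field `F` with derivation `DF`, extend the
derivation to the rational function field `F(x) = RatFunc F` by `x' = g`.
Then the constants of `F(x)` are exactly the (images of the) constants of `F`
iff `g` is not a derivative in `F`. -/
theorem stmt_0 (F : Type*) [Field F] [CharZero F]
    (DF : F → F)
    (hFadd : ∀ a b : F, DF (a + b) = DF a + DF b)
    (hFmul : ∀ a b : F, DF (a * b) = a * DF b + DF a * b)
    (g : F)
    (DE : RatFunc F → RatFunc F)
    (hEadd : ∀ a b : RatFunc F, DE (a + b) = DE a + DE b)
    (hEmul : ∀ a b : RatFunc F, DE (a * b) = a * DE b + DE a * b)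
    (hcompat : ∀ a : F, DE (algebraMap F (RatFunc F) a) = algebraMap F (RatFunc F) (DF a))
    (hX : DE RatFunc.X = algebraMap F (RatFunc F) g) :
    {h : RatFunc F | DE h = 0} = (algebraMap F (RatFunc F)) '' {c : F | DF c = 0}
      ↔ ¬ ∃ f : F, DF f = g := by
  let _ : Differential F := ⟨.ofAddMul DF hFadd hFmul⟩
  let _ : Differential (RatFunc F) := ⟨.ofAddMul DE hEadd hEmul⟩
  have : DifferentialAlgebra F (RatFunc F) := ⟨hcompat⟩
  exact (Differential.setOf_deriv_eq_zero_eq_image_iff (algebraMap F (RatFunc F)).injective).trans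
    (Differential.containConstants_ratFunc_iff hX)
end

section
/- Let F be a differential field of characteristic zero with field of constants C, let f_2, …, f_n ∈ F be nonzero, and let A be the n×n matrix over F with entries A_{i,i+1} = 1/f_{n-i+1} for 1 ≤ i ≤ n−1 and all other entries zero. Suppose T = (t_{i,j}) is an upper unitriangular matrix over a differential field extension E of F with T' = A·T. Then the entries t_{1,1}, t_{1,2}, …, t_{1,n} of the first row of T are linearly independent over the constants C of E. -/
/-!
Put `v := T c`, whose `k`-th entry is `∑ᵢ cᵢ t_{k,i}`. Since the `cᵢ` are constants,
`v' = T' c = A T c = A v`, and as `A` is superdiagonal with invertible entries this reads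
`v_k' = a_k v_{k+1}`. The hypothesis is `v₁ = 0`, so every `v_k` vanishes, and
`T c = 0` forces `c = 0` because `det T = 1`.
-/

open Matrix

theorem Matrix.map_mulVec_apply_of_map_eq_zero {m n E : Type*} [Fintype n] [CommRing E]
    (D : E →+ E) (hD : ∀ a b : E, D (a * b) = a * D b + D a * b)
    (T : Matrix m n E) (c : n → E) (hc : ∀ i, D (c i) = 0) (k : m) :
    D ((T *ᵥ c) k) = (T.map D *ᵥ c) k := by
  simp [mulVec, dotProduct, map_sum, hD, hc]

section Superdiagonal

variable {R : Type*} {n : ℕ} (A : Matrix (Fin n) (Fin n) R) (a : Fin n → R)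

theorem Matrix.mulVec_apply_of_superdiagonal [NonUnitalNonAssocSemiring R]
    (hA : ∀ i j : Fin n, A i j = if (j : ℕ) = i + 1 then a i else 0)
    (v : Fin n → R) (i : Fin n) (hi : (i : ℕ) + 1 < n) :
    (A *ᵥ v) i = a i * v ⟨i + 1, hi⟩ := by
  rw [mulVec, dotProduct, Finset.sum_eq_single ⟨i + 1, hi⟩]
  · simp [hA]
  · intro j _ hj
    rw [hA, if_neg (fun h => hj (Fin.ext h)), zero_mul]
  · simp

theorem Matrix.eq_zero_of_map_eq_superdiagonal_mulVec [NonUnitalNonAssocSemiring R]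
    [NoZeroDivisors R] (hA : ∀ i j : Fin n, A i j = if (j : ℕ) = i + 1 then a i else 0)
    (ha : ∀ i : Fin n, (i : ℕ) + 1 < n → a i ≠ 0)
    (D : R → R) (hD0 : D 0 = 0) (v : Fin n → R) (hv : ∀ i, D (v i) = (A *ᵥ v) i)
    (hn : 0 < n) (h0 : v ⟨0, hn⟩ = 0) : v = 0 := by
  suffices h : ∀ k (hk : k < n), v ⟨k, hk⟩ = 0 from funext fun i => h i i.2
  intro k
  induction k with
  | zero => exact fun _ => h0
  | succ k ih =>
    intro hk
    have hvk := hv ⟨k, by omega⟩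
    rw [ih (by omega), hD0, mulVec_apply_of_superdiagonal A a hA v _ hk] at hvk
    exact (mul_eq_zero.mp hvk.symm).resolve_left (ha _ hk)

end Superdiagonal

theorem Matrix.eq_zero_of_unitriangular_mulVec_eq_zero {m R : Type*} [Fintype m]
    [DecidableEq m] [LinearOrder m] [CommRing R] {T : Matrix m m R}
    (hT : T.IsUpperTriangular) (h1 : ∀ i, T i i = 1) {c : m → R} (hc : T *ᵥ c = 0) :
    c = 0 := by
  refine eq_zero_of_det_mem_nonZeroDivisors_of_mulVec_eq_zero ?_ hc
  rw [det_of_isUpperTriangular hT]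
  simp [h1]

theorem stmt_5_general (F E : Type*) [Field F] [Field E] [Algebra F E]
    (DE : E → E)
    (hEadd : ∀ a b : E, DE (a + b) = DE a + DE b)
    (hEmul : ∀ a b : E, DE (a * b) = a * DE b + DE a * b)
    (n : ℕ) (hn : 1 ≤ n)
    (f : ℕ → F) (hf : ∀ k, 2 ≤ k → k ≤ n → f k ≠ 0)
    (A : Matrix (Fin n) (Fin n) E)
    (hA : ∀ i j : Fin n,
      A i j = if (j : ℕ) = (i : ℕ) + 1 then (algebraMap F E (f (n - (i : ℕ))))⁻¹ else 0)
    (T : Matrix (Fin n) (Fin n) E)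
    (hT1 : ∀ i, T i i = 1)
    (hT0 : ∀ i j : Fin n, (j : ℕ) < (i : ℕ) → T i j = 0)
    (hT' : ∀ i j : Fin n, DE (T i j) = (A * T) i j)
    (c : Fin n → E) (hc : ∀ i, DE (c i) = 0)
    (hrel : ∑ i : Fin n, c i * T ⟨0, hn⟩ i = 0) :
    ∀ i, c i = 0 := by
  let D : E →+ E := AddMonoidHom.mk' DE hEadd
  have hTD : T.map D = A * T := Matrix.ext hT'
  have hrow (k : Fin n) : DE ((T *ᵥ c) k) = (A *ᵥ (T *ᵥ c)) k := by
    rw [mulVec_mulVec, ← hTD]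
    exact map_mulVec_apply_of_map_eq_zero D hEmul T c hc k
  have hfirst : (T *ᵥ c) ⟨0, hn⟩ = 0 := by
    simpa only [mulVec, dotProduct, mul_comm] using hrel
  have ha (i : Fin n) (hi : (i : ℕ) + 1 < n) : (algebraMap F E (f (n - i)))⁻¹ ≠ 0 :=
    inv_ne_zero <| (map_ne_zero _).mpr <| hf _ (by omega) (by omega)
  have hTc : T *ᵥ c = 0 :=
    eq_zero_of_map_eq_superdiagonal_mulVec A _ hA ha DE (map_zero D) _ hrow hn hfirst
  exact congrFun (eq_zero_of_unitriangular_mulVec_eq_zero (fun i j h => hT0 i j h) hT1 hTc)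

/-- if `A` is the matrix with superdiagonal entries `1/f_{n-i+1}`
(`f₂,…,f_n` nonzero in `F`) and `T` is an upper unitriangular matrix over a
differential field extension `E` with `T' = A·T`, then the entries of the first
row of `T` are linearly independent over the constants of `E`. -/
theorem stmt_5 (F E : Type*) [Field F] [Field E] [Algebra F E] [CharZero F]
    (DE : E → E)
    (hEadd : ∀ a b : E, DE (a + b) = DE a + DE b)
    (hEmul : ∀ a b : E, DE (a * b) = a * DE b + DE a * b)
    (n : ℕ) (hn : 1 ≤ n)
    (f : ℕ → F) (hf : ∀ k, 2 ≤ k → k ≤ n → f k ≠ 0)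
    (A : Matrix (Fin n) (Fin n) E)
    (hA : ∀ i j : Fin n,
      A i j = if (j : ℕ) = (i : ℕ) + 1 then (algebraMap F E (f (n - (i : ℕ))))⁻¹ else 0)
    (T : Matrix (Fin n) (Fin n) E)
    (hT1 : ∀ i, T i i = 1)
    (hT0 : ∀ i j : Fin n, (j : ℕ) < (i : ℕ) → T i j = 0)
    (hT' : ∀ i j : Fin n, DE (T i j) = (A * T) i j)
    (c : Fin n → E) (hc : ∀ i, DE (c i) = 0)
    (hrel : ∑ i : Fin n, c i * T ⟨0, hn⟩ i = 0) :
    ∀ i, c i = 0 :=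
  stmt_5_general F E DE hEadd hEmul n hn f hf A hA T hT1 hT0 hT' c hc hrel
end

section
/- Let F be a differential field of characteristic zero with algebraically closed field of constants C and F ≠ C, and let E be a Picard-Vessiot extension of F. If there exists a tuple f ∈ (F*)^l such that E is a Picard-Vessiot extension of F for the operator L_f = f_1 ∂ f_2 ∂ ⋯ f_l ∂, then the differential Galois group G(E|F) is a unipotent linear algebraic group. -/
/-!
Writing `L_f = f₁ ∂ ∘ (f₂ ∂ ∘ ⋯ ∘ f_l ∂)`, every solution `y` of `L_f` for `f = (f₁, …, f_l)`
has `z = f_l y'` solving `L_{(f₁, …, f_{l-1})}`, so `y' = z / f_l`. By induction on `l`, all the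
solutions lie in a field `F(η₁, …, η_m)` with `η_i' ∈ F(η₁, …, η_{i-1})`: the elements of each new
level are integrals of elements of the previous levels. Such a field is closed under the
derivation, so it contains all derivatives of the solutions, i.e. it is the Picard-Vessiot
extension.
-/

/-- The differential operator `L_f = f₁ ∂ f₂ ∂ ⋯ f_l ∂` applied to `η`. -/
def Lop {E : Type*} [Field E] (D : E → E) : List E → E → E
  | [], η => η
  | f :: fs, η => f * D (Lop D fs η)

open IntermediateField

section Derivation

variable {E : Type*} [Field E] (D : E → E)

theorem deriv_zero_of_add (hadd : ∀ a b : E, D (a + b) = D a + D b) : D 0 = 0 := by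
  simpa using hadd 0 0

theorem deriv_one_of_mul (hmul : ∀ a b : E, D (a * b) = a * D b + D a * b) : D 1 = 0 := by
  simpa using hmul 1 1

theorem deriv_inv_of_mul (hmul : ∀ a b : E, D (a * b) = a * D b + D a * b) {x : E}
    (hx : x ≠ 0) : D x⁻¹ = -(D x * (x⁻¹ * x⁻¹)) := by
  have h := hmul x x⁻¹
  rw [mul_inv_cancel₀ hx, deriv_one_of_mul D hmul] at h
  rw [← inv_mul_cancel_left₀ hx (D x⁻¹), eq_neg_of_add_eq_zero_left h.symm]
  ring

variable {F : Type*} [Field F] [Algebra F E] {DF : F → F}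

theorem deriv_mem_adjoin (hadd : ∀ a b : E, D (a + b) = D a + D b)
    (hmul : ∀ a b : E, D (a * b) = a * D b + D a * b)
    (hcompat : ∀ a : F, D (algebraMap F E a) = algebraMap F E (DF a))
    {S : Set E} (hS : ∀ s ∈ S, D s ∈ adjoin F S) {x : E} (hx : x ∈ adjoin F S) :
    D x ∈ adjoin F S := by
  induction hx using IntermediateField.adjoin_induction with
  | mem x hx => exact hS x hx
  | algebraMap a => rw [hcompat]; exact IntermediateField.algebraMap_mem _ _
  | add x z _ _ ihx ihz => rw [hadd]; exact add_mem ihx ihz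
  | mul x z hx hz ihx ihz => rw [hmul]; exact add_mem (mul_mem hx ihz) (mul_mem ihx hz)
  | inv x hx ihx =>
    rcases eq_or_ne x 0 with rfl | hx0
    · rw [inv_zero, deriv_zero_of_add D hadd]; exact zero_mem _
    · rw [deriv_inv_of_mul D hmul hx0]
      exact neg_mem (mul_mem ihx (mul_mem (inv_mem hx) (inv_mem hx)))

theorem iterate_deriv_mem_adjoin (hadd : ∀ a b : E, D (a + b) = D a + D b)
    (hmul : ∀ a b : E, D (a * b) = a * D b + D a * b)
    (hcompat : ∀ a : F, D (algebraMap F E a) = algebraMap F E (DF a))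
    {S : Set E} (hS : ∀ s ∈ S, D s ∈ adjoin F S) {x : E} (hx : x ∈ adjoin F S) (j : ℕ) :
    D^[j] x ∈ adjoin F S := by
  induction j with
  | zero => exact hx
  | succ j ih =>
    rw [Function.iterate_succ_apply']
    exact deriv_mem_adjoin D hadd hmul hcompat hS ih

end Derivation

def IsTowerOfIntegrals (F : Type*) {E : Type*} [Field F] [Field E] [Algebra F E] (D : E → E)
    {m : ℕ} (η : Fin m → E) : Prop :=
  ∀ i, D (η i) ∈ adjoin F (η '' {j | j < i})

namespace IsTowerOfIntegrals

variable {F E : Type*} [Field F] [Field E] [Algebra F E] {D : E → E} {m : ℕ} {η : Fin m → E}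

theorem deriv_mem_adjoin_range (hη : IsTowerOfIntegrals F D η) (i : Fin m) :
    D (η i) ∈ adjoin F (Set.range η) :=
  adjoin.mono F _ _ (Set.image_subset_range _ _) (hη i)

theorem append (hη : IsTowerOfIntegrals F D η) {n : ℕ} {z : Fin n → E}
    (hz : ∀ i, D (z i) ∈ adjoin F (Set.range η)) :
    IsTowerOfIntegrals F D (Fin.append η z) := by
  intro i
  refine Fin.addCases (fun i => ?_) (fun i => ?_) i
  · rw [Fin.append_left]
    refine adjoin.mono F _ _ ?_ (hη i)
    rintro _ ⟨j, hj, rfl⟩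
    exact ⟨Fin.castAdd n j, Fin.lt_def.mpr hj, Fin.append_left η z j⟩
  · rw [Fin.append_right]
    refine adjoin.mono F _ _ ?_ (hz i)
    rintro _ ⟨j, rfl⟩
    have hji : Fin.castAdd n j < Fin.natAdd m i :=
      Fin.lt_def.mpr (by simp only [Fin.val_castAdd, Fin.val_natAdd]; omega)
    exact ⟨Fin.castAdd n j, hji, Fin.append_left η z j⟩

end IsTowerOfIntegrals

theorem Lop_append_singleton {E : Type*} [Field E] (D : E → E) (gs : List E) (h y : E) :
    Lop D (gs ++ [h]) y = Lop D gs (h * D y) := by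
  induction gs with
  | nil => rfl
  | cons g gs ih => simp only [List.cons_append, Lop, ih]

theorem exists_tower_of_Lop_eq_zero {F E : Type*} [Field F] [Field E] [Algebra F E]
    (D : E → E) (gs : List F) (hgs : ∀ g ∈ gs, g ≠ 0) {n : ℕ} (y : Fin n → E)
    (hy : ∀ i, Lop D (gs.map (algebraMap F E)) (y i) = 0) :
    ∃ (m : ℕ) (η : Fin m → E), IsTowerOfIntegrals F D η ∧ ∀ i, y i ∈ adjoin F (Set.range η) := by
  induction gs using List.reverseRecOn generalizing n with
  | nil =>
    refine ⟨0, Fin.elim0, fun i => i.elim0, fun i => ?_⟩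
    rw [show y i = 0 from hy i]
    exact zero_mem _
  | append_singleton gs h ih =>
    have hh : algebraMap F E h ≠ 0 := by simpa using hgs h (by simp)
    obtain ⟨m, η, hη, hz⟩ := ih (fun g hg => hgs g (by simp [hg]))
      (fun i => algebraMap F E h * D (y i))
      (fun i => by simpa [Lop_append_singleton] using hy i)
    refine ⟨m + n, Fin.append η y, hη.append fun i => ?_, fun i => ?_⟩
    · rw [show D (y i) = (algebraMap F E h)⁻¹ * (algebraMap F E h * D (y i)) by field_simp]
      exact mul_mem (inv_mem (IntermediateField.algebraMap_mem _ _)) (hz i)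
    · exact subset_adjoin F _ ⟨Fin.natAdd m i, Fin.append_right η y i⟩

theorem stmt_7_general (F E : Type*) [Field F] [Field E] [Algebra F E]
    (DF : F → F)
    (DE : E → E)
    (hEadd : ∀ a b : E, DE (a + b) = DE a + DE b)
    (hEmul : ∀ a b : E, DE (a * b) = a * DE b + DE a * b)
    (hcompat : ∀ a : F, DE (algebraMap F E a) = algebraMap F E (DF a))
    -- E is a Picard-Vessiot extension of F for L_f
    (l : ℕ) (fs : Fin l → F) (hfs : ∀ i, fs i ≠ 0)
    (y : Fin l → E)
    (hsol : ∀ i, Lop DE ((List.ofFn fs).map (algebraMap F E)) (y i) = 0)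
    (hgen : IntermediateField.adjoin F {e : E | ∃ i j, DE^[j] (y i) = e} = ⊤) :
    ∃ (m : ℕ) (η : Fin m → E),
      IntermediateField.adjoin F (Set.range η) = ⊤ ∧
      ∀ i : Fin m, DE (η i) ∈ IntermediateField.adjoin F (η '' {j | j < i}) := by
  obtain ⟨m, η, hη, hy⟩ :=
    exists_tower_of_Lop_eq_zero DE (List.ofFn fs) (List.forall_mem_ofFn_iff.mpr hfs) y hsol
  refine ⟨m, η, top_le_iff.mp ?_, hη⟩
  rw [← hgen, adjoin_le_iff]
  rintro _ ⟨i, j, rfl⟩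
  refine iterate_deriv_mem_adjoin DE hEadd hEmul hcompat ?_ (hy i) j
  rintro _ ⟨k, rfl⟩
  exact hη.deriv_mem_adjoin_range k

/-- if `E` is a Picard-Vessiot extension of `F` (with algebraically
closed constants `C`, `F ≠ C`) for an operator `L_f = f₁ ∂ ⋯ f_l ∂` with all
`f_i ∈ F*`, then the differential Galois group is unipotent; by the standard
characterization this means `E = F(η₁,…,η_m)` with `η₁' ∈ F` and
`η_i' ∈ F(η₁,…,η_{i-1})`. -/
theorem stmt_7 (F E : Type*) [Field F] [Field E] [Algebra F E] [CharZero F]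
    (DF : F → F)
    (hFadd : ∀ a b : F, DF (a + b) = DF a + DF b)
    (hFmul : ∀ a b : F, DF (a * b) = a * DF b + DF a * b)
    (DE : E → E)
    (hEadd : ∀ a b : E, DE (a + b) = DE a + DE b)
    (hEmul : ∀ a b : E, DE (a * b) = a * DE b + DE a * b)
    (hcompat : ∀ a : F, DE (algebraMap F E a) = algebraMap F E (DF a))
    -- the field of constants of F is algebraically closed
    (hCalg : ∀ p : Polynomial F, 0 < p.degree → (∀ i, DF (p.coeff i) = 0) →
      ∃ r : F, DF r = 0 ∧ p.eval r = 0)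
    -- F ≠ C
    (hFC : ∃ a : F, DF a ≠ 0)
    -- E and F have the same constants
    (hconst : ∀ e : E, DE e = 0 → ∃ c : F, DF c = 0 ∧ algebraMap F E c = e)
    -- E is a Picard-Vessiot extension of F for L_f
    (l : ℕ) (hl : 1 ≤ l) (fs : Fin l → F) (hfs : ∀ i, fs i ≠ 0)
    (y : Fin l → E)
    (hsol : ∀ i, Lop DE ((List.ofFn fs).map (algebraMap F E)) (y i) = 0)
    (hindep : ∀ c : Fin l → E, (∀ i, DE (c i) = 0) →
      ∑ i, c i * y i = 0 → ∀ i, c i = 0)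
    (hgen : IntermediateField.adjoin F {e : E | ∃ i j, DE^[j] (y i) = e} = ⊤) :
    ∃ (m : ℕ) (η : Fin m → E),
      IntermediateField.adjoin F (Set.range η) = ⊤ ∧
      ∀ i : Fin m, DE (η i) ∈ IntermediateField.adjoin F (η '' {j | j < i}) :=
  stmt_7_general F E DF DE hEadd hEmul hcompat l fs hfs y hsol hgen
end

section
/- Let F be a differential field of characteristic zero with algebraically closed field of constants C, and let E be a Picard-Vessiot extension of F whose differential Galois group is unipotent. Then the Picard-Vessiot ring T(E|F) = {x ∈ E : L(x) = 0 for some L ∈ F[∂]} equals the set of all generalized iterated integrals of F contained in E. -/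
/-- `η` is a generalized iterated integral of `F` (inside `E`). -/
def IsGenIterInt {F E : Type*} [Field F] [Field E] [Algebra F E]
    (D : E → E) (η : E) : Prop :=
  ∃ fs : List F, fs ≠ [] ∧ (∀ f ∈ fs, f ≠ 0) ∧
    Lop D (fs.map (algebraMap F E)) η = 0

/-- `e` lies in the Picard-Vessiot ring `T(E|F)`: it is annihilated by a monic
linear differential operator over `F`. -/
def InPVRing {F E : Type*} [Field F] [Field E] [Algebra F E]
    (DF : F → F) (DE : E → E) (e : E) : Prop :=
  ∃ (k : ℕ) (a : Fin (k + 1) → F), a (Fin.last k) = 1 ∧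
    ∑ i : Fin (k + 1), algebraMap F E (a i) * DE^[(i : ℕ)] e = 0

section

open Submodule

variable {F E : Type*} [Field F] [Field E] [Algebra F E]

theorem Lop_append (D : E → E) (xs ys : List E) (η : E) :
    Lop D (xs ++ ys) η = Lop D xs (Lop D ys η) := by
  induction xs with
  | nil => rfl
  | cons x xs ih => simp only [List.cons_append, Lop, ih]

structure IsDerivationExtending (DF : F → F) (DE : E → E) : Prop where
  map_add : ∀ a b : E, DE (a + b) = DE a + DE b
  leibniz : ∀ a b : E, DE (a * b) = a * DE b + DE a * b
  map_algebraMap : ∀ a : F, DE (algebraMap F E a) = algebraMap F E (DF a)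

namespace IsDerivationExtending

variable {DF : F → F} {DE : E → E}

theorem map_zero (h : IsDerivationExtending DF DE) : DE 0 = 0 := by
  simpa using h.map_add 0 0

theorem map_one (h : IsDerivationExtending DF DE) : DE 1 = 0 := by
  simpa using h.leibniz 1 1

theorem map_smul (h : IsDerivationExtending DF DE) (c : F) (x : E) :
    DE (c • x) = c • DE x + DF c • x := by
  simp only [Algebra.smul_def, h.leibniz, h.map_algebraMap]

end IsDerivationExtending

inductive HasUnipotentFlag (F : Type*) {E : Type*} [Field F] [Field E] [Algebra F E]
    (DE : E → E) : Submodule F E → Prop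
  | bot : HasUnipotentFlag F DE ⊥
  | sup_span {W : Submodule F E} {v : E} :
      HasUnipotentFlag F DE W → DE v ∈ W → HasUnipotentFlag F DE (W ⊔ span F {v})

namespace HasUnipotentFlag

variable {DF : F → F} {DE : E → E} {W W₁ W₂ : Submodule F E}

theorem deriv_mem (h : IsDerivationExtending DF DE) (hW : HasUnipotentFlag F DE W)
    {x : E} (hx : x ∈ W) : DE x ∈ W := by
  induction hW generalizing x with
  | bot => rw [(mem_bot F).1 hx, h.map_zero]; exact zero_mem _
  | @sup_span W v _ hv ih =>
    obtain ⟨w, hw, _, hy, rfl⟩ := mem_sup.1 hx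
    obtain ⟨c, rfl⟩ := mem_span_singleton.1 hy
    rw [h.map_add, h.map_smul]
    exact add_mem (mem_sup_left (ih hw)) (add_mem (mem_sup_left (smul_mem _ _ hv))
      (mem_sup_right (smul_mem _ _ (mem_span_singleton_self v))))

theorem sup (h₁ : HasUnipotentFlag F DE W₁) (h₂ : HasUnipotentFlag F DE W₂) :
    HasUnipotentFlag F DE (W₁ ⊔ W₂) := by
  induction h₂ with
  | bot => rwa [sup_bot_eq]
  | sup_span _ hv ih => rw [← sup_assoc]; exact ih.sup_span (mem_sup_right hv)

theorem one (h : IsDerivationExtending DF DE) : HasUnipotentFlag F DE 1 := by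
  rw [one_eq_span, ← bot_sup_eq (span F {1})]
  exact bot.sup_span (by rw [h.map_one]; exact zero_mem _)

theorem mul_sup_span_mul (h : IsDerivationExtending DF DE) {v : E} {U : Submodule F E}
    (hW : HasUnipotentFlag F DE (W₁ * W₂)) (hv : DE v ∈ W₁)
    (hU : HasUnipotentFlag F DE U) (hUW₂ : U ≤ W₂) :
    HasUnipotentFlag F DE (W₁ * W₂ ⊔ span F {v} * U) := by
  induction hU with
  | bot => rwa [mul_bot, sup_bot_eq]
  | @sup_span U u _ hu ih =>
    have hUW₂' : U ≤ W₂ := le_sup_left.trans hUW₂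
    have hvu : DE (v * u) ∈ W₁ * W₂ ⊔ span F {v} * U := by
      rw [h.leibniz]
      exact add_mem (mem_sup_right (mul_mem_mul (mem_span_singleton_self v) hu))
        (mem_sup_left (mul_mem_mul hv (hUW₂ (mem_sup_right (mem_span_singleton_self u)))))
    rw [Submodule.mul_sup, ← sup_assoc, span_mul_span, Set.singleton_mul_singleton]
    exact (ih hUW₂').sup_span hvu

theorem mul (h : IsDerivationExtending DF DE) (h₁ : HasUnipotentFlag F DE W₁)
    (h₂ : HasUnipotentFlag F DE W₂) : HasUnipotentFlag F DE (W₁ * W₂) := by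
  induction h₁ with
  | bot => rw [bot_mul]; exact bot
  | sup_span _ hv ih =>
    rw [Submodule.sup_mul]
    exact mul_sup_span_mul h ih hv h₂ le_rfl

end HasUnipotentFlag

namespace IsDerivationExtending

variable {DF : F → F} {DE : E → E}

def flagSubalgebra (h : IsDerivationExtending DF DE) : Subalgebra F E where
  carrier := {x | ∃ W, HasUnipotentFlag F DE W ∧ x ∈ W}
  mul_mem' := fun ⟨_, h₁, hx⟩ ⟨_, h₂, hy⟩ => ⟨_, h₁.mul h h₂, mul_mem_mul hx hy⟩
  add_mem' := fun ⟨_, h₁, hx⟩ ⟨_, h₂, hy⟩ => ⟨_, h₁.sup h₂, add_mem_sup hx hy⟩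
  algebraMap_mem' r := ⟨1, HasUnipotentFlag.one h, algebraMap_mem r⟩

theorem mem_flagSubalgebra_of_deriv_mem (h : IsDerivationExtending DF DE) {v : E}
    (hv : DE v ∈ h.flagSubalgebra) : v ∈ h.flagSubalgebra :=
  let ⟨_, hW, hvW⟩ := hv
  ⟨_, hW.sup_span hvW, mem_sup_right (mem_span_singleton_self v)⟩

theorem adjoin_range_le_flagSubalgebra (h : IsDerivationExtending DF DE) {ι : Type*}
    [Preorder ι] [WellFoundedLT ι] {η : ι → E}
    (hη : ∀ i, DE (η i) ∈ Algebra.adjoin F (η '' {j | j < i})) :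
    Algebra.adjoin F (Set.range η) ≤ h.flagSubalgebra := by
  refine Algebra.adjoin_le (Set.range_subset_iff.2 fun i => ?_)
  induction i using WellFoundedLT.induction with
  | ind i ih =>
    refine h.mem_flagSubalgebra_of_deriv_mem (Algebra.adjoin_le ?_ (hη i))
    rintro _ ⟨j, hj, rfl⟩
    exact ih j hj

theorem exists_lop_mem_of_mem_sup_span (h : IsDerivationExtending DF DE)
    {W : Submodule F E} (hW : ∀ x ∈ W, DE x ∈ W) {v e : E} (hv : DE v ∈ W)
    (he : e ∈ W ⊔ span F {v}) :
    ∃ gs : List F, (∀ g ∈ gs, g ≠ 0) ∧ Lop DE (gs.map (algebraMap F E)) e ∈ W := by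
  obtain ⟨w, hw, _, hy, rfl⟩ := mem_sup.1 he
  obtain ⟨c, rfl⟩ := mem_span_singleton.1 hy
  have hu : DE w + c • DE v ∈ W := add_mem (hW w hw) (smul_mem _ _ hv)
  have hD : DE (w + c • v) = (DE w + c • DE v) + DF c • v := by
    rw [h.map_add, h.map_smul, add_assoc]
  by_cases hc : DF c = 0
  · refine ⟨[1], by simp, ?_⟩
    simpa [Lop, hD, hc] using hu
  · refine ⟨[1, (DF c)⁻¹], by simp [hc], ?_⟩
    have hnorm : (DF c)⁻¹ • DE (w + c • v) = (DF c)⁻¹ • (DE w + c • DE v) + v := by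
      rw [hD, smul_add, smul_smul, inv_mul_cancel₀ hc, one_smul]
    show algebraMap F E 1 * DE (algebraMap F E (DF c)⁻¹ * DE (w + c • v)) ∈ W
    rw [_root_.map_one, one_mul, ← Algebra.smul_def, hnorm, h.map_add]
    exact add_mem (hW _ (smul_mem _ _ hu)) hv

end IsDerivationExtending

namespace HasUnipotentFlag

variable {DF : F → F} {DE : E → E} {W : Submodule F E}

theorem exists_lop_eq_zero (h : IsDerivationExtending DF DE) (hW : HasUnipotentFlag F DE W)
    {e : E} (he : e ∈ W) :
    ∃ fs : List F, (∀ f ∈ fs, f ≠ 0) ∧ Lop DE (fs.map (algebraMap F E)) e = 0 := by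
  induction hW generalizing e with
  | bot => exact ⟨[], by simp, (mem_bot F).1 he⟩
  | sup_span hW hv ih =>
    obtain ⟨gs, hgs, hg⟩ :=
      h.exists_lop_mem_of_mem_sup_span (fun _ hx => hW.deriv_mem h hx) hv he
    obtain ⟨fs, hfs, hf⟩ := ih hg
    refine ⟨fs ++ gs, fun f hf => (List.mem_append.1 hf).elim (hfs f) (hgs f), ?_⟩
    rw [List.map_append, Lop_append, hf]

theorem isGenIterInt (h : IsDerivationExtending DF DE) (hW : HasUnipotentFlag F DE W)
    {e : E} (he : e ∈ W) : IsGenIterInt (F := F) DE e := by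
  obtain ⟨fs, hfs, hf⟩ := hW.exists_lop_eq_zero h he
  exact ⟨1 :: fs, List.cons_ne_nil _ _, List.forall_mem_cons.2 ⟨one_ne_zero, hfs⟩,
    by simp [Lop, hf, h.map_zero]⟩

end HasUnipotentFlag

theorem inPVRing_of_iterate_mem_span {DF : F → F} {DE : E → E} {e : E} {k : ℕ}
    (hk : DE^[k] e ∈ span F (Set.range fun i : Fin k => DE^[i] e)) : InPVRing DF DE e := by
  obtain ⟨c, hc⟩ := (mem_span_range_iff_exists_fun F).1 hk
  refine ⟨k, Fin.snoc (-c) 1, by simp, ?_⟩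
  simp [Fin.sum_univ_castSucc, ← hc, Algebra.smul_def]

namespace IsDerivationExtending

variable {DF : F → F} {DE : E → E}

theorem deriv_mem_span_iterate (h : IsDerivationExtending DF DE) {e x : E} {k : ℕ}
    (hx : x ∈ span F (Set.range fun i : Fin k => DE^[i] e)) :
    DE x ∈ span F (Set.range fun i : Fin (k + 1) => DE^[i] e) := by
  have hmono : span F (Set.range fun i : Fin k => DE^[i] e) ≤
      span F (Set.range fun i : Fin (k + 1) => DE^[i] e) :=
    span_mono (Set.range_subset_iff.2 fun i => ⟨i.castSucc, rfl⟩)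
  induction hx using span_induction with
  | mem _ hy =>
    obtain ⟨i, rfl⟩ := hy
    exact subset_span ⟨i.succ, by simp [Function.iterate_succ_apply']⟩
  | zero => rw [h.map_zero]; exact zero_mem _
  | add _ _ _ _ ihx ihy => rw [h.map_add]; exact add_mem ihx ihy
  | smul c y hy ih => rw [h.map_smul]; exact add_mem (smul_mem _ _ ih) (smul_mem _ _ (hmono hy))

theorem exists_lop_eq_prod_mul_iterate_add (h : IsDerivationExtending DF DE) (fs : List F)
    (e : E) : ∃ v ∈ span F (Set.range fun i : Fin fs.length => DE^[i] e),
      Lop DE (fs.map (algebraMap F E)) e = algebraMap F E fs.prod * DE^[fs.length] e + v := by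
  induction fs with
  | nil => exact ⟨0, zero_mem _, by simp [Lop]⟩
  | cons f fs ih =>
    obtain ⟨v, hv, hL⟩ := ih
    refine ⟨f • (DF fs.prod • DE^[fs.length] e + DE v),
      smul_mem _ _ (add_mem (smul_mem _ _ (subset_span ⟨Fin.last _, rfl⟩))
        (h.deriv_mem_span_iterate hv)), ?_⟩
    simp only [List.map_cons, Lop, hL, h.map_add, h.leibniz, h.map_algebraMap, List.prod_cons,
      List.length_cons, Function.iterate_succ_apply', Algebra.smul_def, _root_.map_mul]
    ring

theorem inPVRing_of_isGenIterInt (h : IsDerivationExtending DF DE) {e : E}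
    (he : IsGenIterInt (F := F) DE e) : InPVRing DF DE e := by
  obtain ⟨fs, -, hnz, hL⟩ := he
  obtain ⟨v, hv, hLv⟩ := h.exists_lop_eq_prod_mul_iterate_add fs e
  have hp : fs.prod ≠ 0 := List.prod_ne_zero fun h0 => hnz 0 h0 rfl
  have hlead : algebraMap F E fs.prod * DE^[fs.length] e = -v :=
    eq_neg_of_add_eq_zero_left (hLv ▸ hL)
  refine inPVRing_of_iterate_mem_span (k := fs.length) ?_
  have hsolve : DE^[fs.length] e = fs.prod⁻¹ • -v := by
    rw [← hlead, Algebra.smul_def, ← mul_assoc, ← _root_.map_mul, inv_mul_cancel₀ hp,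
      _root_.map_one, one_mul]
  rw [hsolve]
  exact smul_mem _ _ (neg_mem hv)

end IsDerivationExtending

end

theorem stmt_8_general (F E : Type*) [Field F] [Field E] [Algebra F E]
    (DF : F → F)
    (DE : E → E)
    (hEadd : ∀ a b : E, DE (a + b) = DE a + DE b)
    (hEmul : ∀ a b : E, DE (a * b) = a * DE b + DE a * b)
    (hcompat : ∀ a : F, DE (algebraMap F E a) = algebraMap F E (DF a))
    -- unipotent Galois group, via the standard characterization of T(E|F)
    (hunip : ∃ (n : ℕ) (η : Fin n → E),
      (∀ i : Fin n, DE (η i) ∈ Algebra.adjoin F (η '' {j | j < i})) ∧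
      (∀ e : E, e ∈ Algebra.adjoin F (Set.range η) ↔ InPVRing DF DE e)) :
    ∀ e : E, InPVRing DF DE e ↔ IsGenIterInt (F := F) DE e := by
  have h : IsDerivationExtending DF DE := ⟨hEadd, hEmul, hcompat⟩
  obtain ⟨n, η, hη, hT⟩ := hunip
  intro e
  refine ⟨fun he => ?_, h.inPVRing_of_isGenIterInt⟩
  obtain ⟨W, hW, heW⟩ := h.adjoin_range_le_flagSubalgebra hη ((hT e).2 he)
  exact hW.isGenIterInt h heW

/-- if `E` is a Picard-Vessiot extension of `F` with unipotent
differential Galois group (encoded by the standard characterization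
`T(E|F) = F[η₁,…,η_n]` with `η₁' ∈ F`, `η_i' ∈ F[η₁,…,η_{i-1}]`), then the
Picard-Vessiot ring `T(E|F)` is exactly the set of generalized iterated
integrals of `F` in `E`. -/
theorem stmt_8 (F E : Type*) [Field F] [Field E] [Algebra F E] [CharZero F]
    (DF : F → F)
    (hFadd : ∀ a b : F, DF (a + b) = DF a + DF b)
    (hFmul : ∀ a b : F, DF (a * b) = a * DF b + DF a * b)
    (DE : E → E)
    (hEadd : ∀ a b : E, DE (a + b) = DE a + DE b)
    (hEmul : ∀ a b : E, DE (a * b) = a * DE b + DE a * b)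
    (hcompat : ∀ a : F, DE (algebraMap F E a) = algebraMap F E (DF a))
    -- the field of constants of F is algebraically closed
    (hCalg : ∀ p : Polynomial F, 0 < p.degree → (∀ i, DF (p.coeff i) = 0) →
      ∃ r : F, DF r = 0 ∧ p.eval r = 0)
    -- E and F have the same constants
    (hconst : ∀ e : E, DE e = 0 → ∃ c : F, DF c = 0 ∧ algebraMap F E c = e)
    -- unipotent Galois group, via the standard characterization of T(E|F)
    (hunip : ∃ (n : ℕ) (η : Fin n → E),
      (∀ i : Fin n, DE (η i) ∈ Algebra.adjoin F (η '' {j | j < i})) ∧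
      (∀ e : E, e ∈ Algebra.adjoin F (Set.range η) ↔ InPVRing DF DE e)) :
    ∀ e : E, InPVRing DF DE e ↔ IsGenIterInt (F := F) DE e :=
  stmt_8_general F E DF DE hEadd hEmul hcompat hunip
end

section
/- Let C be a field of characteristic zero and F = C(x) with x' = 1. An element f ∈ F is ∞-integrable in F (i.e. for every n ≥ 1 there exists η_n ∈ F with η_n^(n) = f) if and only if f ∈ C[x]. -/
/-!
If `g` has a pole of exact order `m ≥ 1` at a prime `π`, then `D g` has a pole of exact order
`m + 1` there: the new numerator is `-m π' a b` modulo `π`, and in characteristic zero neither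
`m` nor `π'` is divisible by `π`. Functions regular at `π` stay regular under `D`. So no iterate
`D^[m] η` has a pole of order exactly `m`, and a rational function with a pole of order `m` is not
`m`-integrable. Conversely, the derivative is surjective on `K[X]` in characteristic zero, so
polynomials are integrable any number of times.
-/

open Polynomial

namespace Polynomial

variable {K : Type*} [Field K] [CharZero K]

theorem derivative_surjective : Function.Surjective (derivative : K[X] → K[X]) := by
  intro p
  induction p using Polynomial.induction_on' with
  | add p q hp hq =>
    obtain ⟨P, rfl⟩ := hp
    obtain ⟨Q, rfl⟩ := hq
    exact ⟨P + Q, derivative_add⟩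
  | monomial n a =>
    refine ⟨monomial (n + 1) (a / (n + 1)), ?_⟩
    rw [derivative_monomial, Nat.add_sub_cancel, Nat.cast_add_one,
      div_mul_cancel₀ _ (Nat.cast_add_one_ne_zero n)]

theorem not_dvd_derivative_of_prime {π : K[X]} (hπ : Prime π) : ¬ π ∣ derivative π := by
  rw [dvd_derivative_iff, derivative_eq_zero]
  exact hπ.irreducible.natDegree_pos.ne'

theorem not_dvd_natCast_of_prime {π : K[X]} (hπ : Prime π) {n : ℕ} (hn : n ≠ 0) :
    ¬ π ∣ (n : K[X]) := fun h ↦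
  hπ.not_isUnit <| isUnit_of_dvd_unit h <| by
    rw [← map_natCast C]
    exact isUnit_C.mpr (isUnit_iff_ne_zero.mpr (Nat.cast_ne_zero.mpr hn))

end Polynomial

namespace RatFunc

variable {K : Type*} [Field K]

local notation "ι" => algebraMap K[X] (RatFunc K)

def IsRegularAt (π : K[X]) (g : RatFunc K) : Prop :=
  ∃ a b : K[X], ¬ π ∣ b ∧ g = ι a / ι b

def HasPoleOfOrder (π : K[X]) (m : ℕ) (g : RatFunc K) : Prop :=
  ∃ a b : K[X], ¬ π ∣ a ∧ ¬ π ∣ b ∧ g = ι a / ι (π ^ m * b)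

variable {π : K[X]} {g : RatFunc K}

theorem HasPoleOfOrder.unique (hπ : Prime π) {m n : ℕ} (hm : HasPoleOfOrder π m g)
    (hn : HasPoleOfOrder π n g) : m = n := by
  obtain ⟨a, b, ha, hb, rfl⟩ := hm
  obtain ⟨c, d, hc, hd, he⟩ := hn
  have hb0 : b ≠ 0 := by rintro rfl; exact hb (dvd_zero π)
  have hd0 : d ≠ 0 := by rintro rfl; exact hd (dvd_zero π)
  rw [div_eq_div_iff (by simp [hπ.ne_zero, hb0]) (by simp [hπ.ne_zero, hd0]), ← map_mul,
    ← map_mul] at he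
  have key := congrArg (emultiplicity π) (IsFractionRing.injective K[X] (RatFunc K) he)
  simp only [emultiplicity_mul hπ, emultiplicity_pow_self_of_prime hπ,
    emultiplicity_eq_zero.mpr, ha, hb, hc, hd, not_false_eq_true, zero_add, add_zero,
    Nat.cast_inj] at key
  exact key.symm

theorem HasPoleOfOrder.eq_zero_of_isRegularAt (hπ : Prime π) {m : ℕ}
    (hm : HasPoleOfOrder π m g) (hg : IsRegularAt π g) : m = 0 := by
  obtain ⟨a, b, ha, hb, rfl⟩ := hm
  obtain ⟨c, d, hd, he⟩ := hg
  have hb0 : b ≠ 0 := by rintro rfl; exact hb (dvd_zero π)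
  have hd0 : d ≠ 0 := by rintro rfl; exact hd (dvd_zero π)
  rw [div_eq_div_iff (by simp [hπ.ne_zero, hb0]) (by simp [hd0]), ← map_mul,
    ← map_mul] at he
  by_contra hm
  have hdvd : π ∣ a * d := by
    rw [IsFractionRing.injective K[X] (RatFunc K) he]
    exact Dvd.dvd.mul_left ((dvd_pow_self π hm).mul_right b) c
  exact (hπ.dvd_mul.mp hdvd).elim ha hd

theorem exists_hasPoleOfOrder_of_dvd_denom (hπ : Prime π) (hdvd : π ∣ g.denom) :
    ∃ m ≠ 0, HasPoleOfOrder π m g := by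
  have hnum : ¬ π ∣ g.num := fun h ↦
    hπ.not_isUnit ((isCoprime_num_denom g).isUnit_of_dvd' h hdvd)
  obtain ⟨n, b, hb, hdenom⟩ := WfDvdMonoid.max_power_factor g.denom_ne_zero hπ.irreducible
  obtain _ | k := n
  · rw [hdenom, pow_zero, one_mul] at hdvd
    exact absurd hdvd hb
  · exact ⟨k + 1, k.succ_ne_zero, g.num, b, hnum, hb, by rw [← hdenom, num_div_denom]⟩

theorem isRegularAt_or_hasPoleOfOrder (hπ : Prime π) (g : RatFunc K) :
    IsRegularAt π g ∨ ∃ m ≠ 0, HasPoleOfOrder π m g := by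
  by_cases hdvd : π ∣ g.denom
  · exact Or.inr (exists_hasPoleOfOrder_of_dvd_denom hπ hdvd)
  · exact Or.inl ⟨g.num, g.denom, hdvd, (num_div_denom g).symm⟩

theorem exists_eq_algebraMap_of_forall_prime_not_dvd_denom
    (h : ∀ π : K[X], Prime π → ¬ π ∣ g.denom) : ∃ p : K[X], ι p = g := by
  have hunit : IsUnit g.denom := by
    by_contra hu
    obtain ⟨π, hπ, hdvd⟩ := WfDvdMonoid.exists_irreducible_factor hu g.denom_ne_zero
    exact h π hπ.prime hdvd
  refine ⟨g.num, ?_⟩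
  conv_rhs => rw [← num_div_denom g, g.monic_denom.eq_one_of_isUnit hunit, map_one, div_one]

section Derivation

variable (D : Derivation K (RatFunc K) (RatFunc K)) (hX : D X = 1)
include hX

theorem derivation_algebraMap (p : K[X]) : D (ι p) = ι (derivative p) := by
  simpa [hX] using D.map_aeval p X

theorem derivation_algebraMap_div (a b : K[X]) :
    D (ι a / ι b) = ι (derivative a * b - a * derivative b) / ι (b ^ 2) := by
  rw [D.leibniz_div, derivation_algebraMap D hX, derivation_algebraMap D hX]
  simp only [map_sub, map_mul, map_pow, smul_eq_mul]
  ring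

theorem iterate_derivation_algebraMap (n : ℕ) (p : K[X]) :
    D^[n] (ι p) = ι (derivative^[n] p) := by
  induction n generalizing p with
  | zero => rfl
  | succ n ih =>
    rw [Function.iterate_succ_apply, derivation_algebraMap D hX, ih,
      Function.iterate_succ_apply]

theorem IsRegularAt.derivation (hπ : Prime π) (hg : IsRegularAt π g) : IsRegularAt π (D g) := by
  obtain ⟨a, b, hb, rfl⟩ := hg
  exact ⟨_, _, fun h ↦ hb (hπ.dvd_of_dvd_pow h), derivation_algebraMap_div D hX a b⟩

theorem HasPoleOfOrder.derivation [CharZero K] (hπ : Prime π) {m : ℕ} (hm : m ≠ 0)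
    (hg : HasPoleOfOrder π m g) : HasPoleOfOrder π (m + 1) (D g) := by
  obtain ⟨k, rfl⟩ := Nat.exists_eq_succ_of_ne_zero hm
  obtain ⟨a, b, ha, hb, rfl⟩ := hg
  set N := derivative a * π * b - (k + 1 : ℕ) * a * derivative π * b - a * π * derivative b
  have hnum :
      derivative a * (π ^ (k + 1) * b) - a * derivative (π ^ (k + 1) * b) = π ^ k * N := by
    simp only [N, derivative_mul, derivative_pow, Nat.add_sub_cancel, C_eq_natCast]
    ring
  have hden : (π ^ (k + 1) * b) ^ 2 = π ^ k * (π ^ (k + 2) * b ^ 2) := by ring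
  have hN : ¬ π ∣ N := by
    intro h
    have hdvd : π ∣ (k + 1 : ℕ) * a * derivative π * b := by
      have : (k + 1 : ℕ) * a * derivative π * b =
          π * (derivative a * b - a * derivative b) - N := by
        ring
      exact this ▸ dvd_sub (dvd_mul_right π _) h
    simp only [hπ.dvd_mul, not_dvd_natCast_of_prime hπ k.succ_ne_zero, ha,
      not_dvd_derivative_of_prime hπ, hb, or_self] at hdvd
  refine ⟨N, b ^ 2, hN, fun h ↦ hb (hπ.dvd_of_dvd_pow h), ?_⟩
  rw [derivation_algebraMap_div D hX, hnum, hden, map_mul, map_mul,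
    mul_div_mul_left _ _ (by simp [hπ.ne_zero])]

theorem IsRegularAt.iterate_derivation (hπ : Prime π) (hg : IsRegularAt π g) (n : ℕ) :
    IsRegularAt π (D^[n] g) := by
  induction n with
  | zero => exact hg
  | succ n ih =>
    rw [Function.iterate_succ_apply']
    exact ih.derivation D hX hπ

theorem HasPoleOfOrder.iterate_derivation [CharZero K] (hπ : Prime π) {m : ℕ} (hm : m ≠ 0)
    (hg : HasPoleOfOrder π m g) (n : ℕ) : HasPoleOfOrder π (m + n) (D^[n] g) := by
  induction n with
  | zero => exact hg
  | succ n ih =>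
    rw [Function.iterate_succ_apply']
    exact ih.derivation D hX hπ (by omega : m + n ≠ 0)

theorem iterate_derivation_ne_of_hasPoleOfOrder [CharZero K] (hπ : Prime π) {m : ℕ}
    (hm : m ≠ 0) (hg : HasPoleOfOrder π m g) (η : RatFunc K) : D^[m] η ≠ g := by
  rintro rfl
  rcases isRegularAt_or_hasPoleOfOrder hπ η with hη | ⟨k, hk, hη⟩
  · exact hm (hg.eq_zero_of_isRegularAt hπ (hη.iterate_derivation D hX hπ m))
  · have := hg.unique hπ (hη.iterate_derivation D hX hπ hk m)
    omega

theorem exists_iterate_derivation_eq_algebraMap [CharZero K] (n : ℕ) (p : K[X]) :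
    ∃ η, D^[n] η = ι p := by
  obtain ⟨q, rfl⟩ := (derivative_surjective (K := K)).iterate n p
  exact ⟨ι q, iterate_derivation_algebraMap D hX n q⟩

theorem forall_exists_iterate_derivation_eq_iff [CharZero K] (f : RatFunc K) :
    (∀ n, 1 ≤ n → ∃ η, D^[n] η = f) ↔ ∃ p : K[X], ι p = f := by
  refine ⟨fun h ↦ exists_eq_algebraMap_of_forall_prime_not_dvd_denom fun π hπ hdvd ↦ ?_, ?_⟩
  · obtain ⟨m, hm, hpole⟩ := exists_hasPoleOfOrder_of_dvd_denom hπ hdvd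
    obtain ⟨η, hη⟩ := h m (Nat.one_le_iff_ne_zero.mpr hm)
    exact iterate_derivation_ne_of_hasPoleOfOrder D hX hπ hm hpole η hη
  · rintro ⟨p, rfl⟩ n -
    exact exists_iterate_derivation_eq_algebraMap D hX n p

end Derivation

end RatFunc

/-- in `F = C(x)` with `x' = 1`, an element is ∞-integrable
(has `n`-th antiderivatives in `F` for all `n ≥ 1`) iff it is a polynomial
in `x`. -/
theorem stmt_11 (C : Type*) [Field C] [CharZero C]
    (D : RatFunc C → RatFunc C)
    (hadd : ∀ a b : RatFunc C, D (a + b) = D a + D b)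
    (hmul : ∀ a b : RatFunc C, D (a * b) = a * D b + D a * b)
    (hC : ∀ c : C, D (algebraMap C (RatFunc C) c) = 0)
    (hX : D RatFunc.X = 1)
    (f : RatFunc C) :
    (∀ n : ℕ, 1 ≤ n → ∃ η : RatFunc C, D^[n] η = f) ↔
      ∃ p : Polynomial C, algebraMap (Polynomial C) (RatFunc C) p = f := by
  let D' : Derivation C (RatFunc C) (RatFunc C) :=
    Derivation.mk'
      { toFun := D
        map_add' := hadd
        map_smul' := fun c g ↦ by
          rw [Algebra.smul_def, hmul, hC, zero_mul, add_zero, RingHom.id_apply,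
            Algebra.smul_def] }
      fun a b ↦ by rw [smul_eq_mul, smul_eq_mul, mul_comm b]; exact hmul a b
  exact RatFunc.forall_exists_iterate_derivation_eq_iff D' hX f
end

section
/- Let F be a differential field of characteristic zero with algebraically closed constants, and let F(y) be a differential field extension with y transcendental over F, the same constants C, and y' = a·y + b for some a, b ∈ F. Assume that (y − c)'/(y − c) ∉ F for every c in the algebraic closure of F. Then every element g ∈ F(y) that is ∞-integrable in F(y) lies in the polynomial ring F[y]. -/
/-!
Write `g = A(y)/B(y)` in lowest terms and suppose an irreducible `p ∈ F[X]` divides `B`, so that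
`g` has a pole of some order `j ≥ 1` along `p`. Differentiation keeps elements regular along `p`
and raises the order of a pole along `p` by exactly one, because `p ∤ p′` for the derivation of
`F[X]` with `X′ = aX + b`: at a root `c ∈ F̄` of `p`, differentiating `p(c) = 0` gives
`p′(c) = (dp/dX)(c) · (ac + b − c′)`, and both factors are nonzero (`p` is separable). Hence the
`j`-th derivative of any `η` is either regular along `p` or has a pole of order `> j` there, so it
is not `g`. The order along `p` is the paper's order in `F̄((y − c))` for any root `c` of `p`.
-/

open Polynomial IntermediateField

theorem ne_zero_of_not_dvd {M : Type*} [SemigroupWithZero M] {a b : M} (h : ¬a ∣ b) : b ≠ 0 := by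
  rintro rfl
  exact h (dvd_zero a)

theorem pow_eq_pow_of_pow_mul_eq_pow_mul {M : Type*} [CommMonoidWithZero M] [IsCancelMulZero M]
    {p X Y : M} (hp : p ≠ 0) (hX : ¬p ∣ X) (hY : ¬p ∣ Y) {j k : ℕ} (h : p ^ j * X = p ^ k * Y) :
    j = k := by
  wlog hjk : j ≤ k generalizing j k X Y
  · exact (this hY hX h.symm (le_of_not_ge hjk)).symm
  obtain ⟨m, rfl⟩ := Nat.exists_eq_add_of_le hjk
  rw [pow_add, mul_assoc] at h
  have hXY : X = p ^ m * Y := mul_left_cancel₀ (pow_ne_zero j hp) h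
  rcases m with _ | m
  · rfl
  · exact absurd (hXY ▸ dvd_mul_of_dvd_left (dvd_pow_self p m.succ_ne_zero) Y) hX

section Poles

variable {K L : Type*} [Field K] [Field L] [Algebra K L] {y : L} {p : K[X]}

def IsRegularAlong (y : L) (p : K[X]) (u : L) : Prop :=
  ∃ A B : K[X], ¬p ∣ B ∧ u = aeval y A / aeval y B

def HasPoleOfOrder (y : L) (p : K[X]) (j : ℕ) (u : L) : Prop :=
  ∃ A B : K[X], ¬p ∣ A ∧ ¬p ∣ B ∧ u = aeval y A / aeval y (p ^ j * B)

theorem aeval_ne_zero_of_transcendental (hy : Transcendental K y) {Q : K[X]} (hQ : Q ≠ 0) :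
    aeval y Q ≠ 0 :=
  mt (transcendental_iff.mp hy Q) hQ

theorem mul_eq_mul_of_aeval_div_eq_aeval_div (hy : Transcendental K y) {A B A' B' : K[X]}
    (hB : B ≠ 0) (hB' : B' ≠ 0) (h : aeval y A / aeval y B = aeval y A' / aeval y B') :
    A * B' = A' * B := by
  rw [div_eq_div_iff (aeval_ne_zero_of_transcendental hy hB)
    (aeval_ne_zero_of_transcendental hy hB'), ← map_mul, ← map_mul] at h
  exact transcendental_iff_injective.mp hy h

theorem HasPoleOfOrder.not_isRegularAlong (hy : Transcendental K y) (hp : Prime p) {j : ℕ}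
    (hj : j ≠ 0) {u : L} (hu : HasPoleOfOrder y p j u) : ¬IsRegularAlong y p u := by
  obtain ⟨A, B, hA, hB, rfl⟩ := hu
  rintro ⟨A', B', hB', h⟩
  have hcross := mul_eq_mul_of_aeval_div_eq_aeval_div hy
    (mul_ne_zero (pow_ne_zero j hp.ne_zero) (ne_zero_of_not_dvd hB)) (ne_zero_of_not_dvd hB') h
  have : p ∣ A * B' :=
    hcross ▸ dvd_mul_of_dvd_right (dvd_mul_of_dvd_left (dvd_pow_self p hj) B) A'
  exact (hp.dvd_or_dvd this).elim hA hB'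

theorem HasPoleOfOrder.unique (hy : Transcendental K y) (hp : Prime p) {j k : ℕ} {u : L}
    (hj : HasPoleOfOrder y p j u) (hk : HasPoleOfOrder y p k u) : j = k := by
  obtain ⟨A, B, hA, hB, rfl⟩ := hj
  obtain ⟨A', B', hA', hB', h⟩ := hk
  have hcross := mul_eq_mul_of_aeval_div_eq_aeval_div hy
    (mul_ne_zero (pow_ne_zero j hp.ne_zero) (ne_zero_of_not_dvd hB))
    (mul_ne_zero (pow_ne_zero k hp.ne_zero) (ne_zero_of_not_dvd hB')) h
  refine pow_eq_pow_of_pow_mul_eq_pow_mul hp.ne_zero (X := A' * B) (Y := A * B')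
    (fun h => (hp.dvd_or_dvd h).elim hA' hB) (fun h => (hp.dvd_or_dvd h).elim hA hB') ?_
  linear_combination hcross.symm

theorem hasPoleOfOrder_of_isCoprime {A B : K[X]} (hAB : IsCoprime A B) (hB : B ≠ 0)
    (hp : Irreducible p) (hpB : p ∣ B) :
    ∃ j ≠ 0, HasPoleOfOrder y p j (aeval y A / aeval y B) := by
  obtain ⟨j, B₁, hB₁, rfl⟩ := WfDvdMonoid.max_power_factor hB hp
  refine ⟨j, ?_, A, B₁, fun hpA => hp.not_isUnit (hAB.isUnit_of_dvd' hpA hpB), hB₁, rfl⟩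
  rintro rfl
  exact hB₁ (by simpa using hpB)

theorem exists_isCoprime_aeval_div (hy : Transcendental K y) (hgen : K⟮y⟯ = ⊤) (u : L) :
    ∃ A B : K[X], IsCoprime A B ∧ B.Monic ∧ u = aeval y A / aeval y B := by
  set r := (RatFunc.algEquivOfTranscendental y hy).symm ⟨u, hgen ▸ mem_top⟩
  refine ⟨r.num, r.denom, r.isCoprime_num_denom, r.monic_denom, ?_⟩
  rw [← RatFunc.algEquivOfTranscendental_apply y hy, AlgEquiv.apply_symm_apply]

theorem isRegularAlong_or_hasPoleOfOrder (hy : Transcendental K y) (hgen : K⟮y⟯ = ⊤)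
    (hp : Irreducible p) (u : L) : IsRegularAlong y p u ∨ ∃ j ≠ 0, HasPoleOfOrder y p j u := by
  obtain ⟨A, B, hAB, hB, rfl⟩ := exists_isCoprime_aeval_div hy hgen u
  by_cases hpB : p ∣ B
  · exact .inr (hasPoleOfOrder_of_isCoprime hAB hB.ne_zero hp hpB)
  · exact .inl ⟨A, B, hpB, rfl⟩

end Poles

open Differential

@[reducible]
def Differential.ofLeibniz {R : Type*} [CommRing R] (D : R → R)
    (hadd : ∀ a b, D (a + b) = D a + D b) (hmul : ∀ a b, D (a * b) = a * D b + D a * b) :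
    Differential R :=
  ⟨Derivation.mk' (AddMonoidHom.mk' D hadd).toIntLinearMap fun a b => by
    simp [hmul, mul_comm]⟩

section Derivative

variable {K L : Type*} [Field K] [Field L] [Algebra K L] [Differential K] [Differential L]
  [DifferentialAlgebra K L] {y : L} {v p : K[X]}

theorem deriv_aeval_div (hv : y′ = aeval y v) (A B : K[X]) :
    (aeval y A / aeval y B)′ =
      aeval y (implicitDeriv v A * B - A * implicitDeriv v B) / aeval y (B ^ 2) := by
  rw [Derivation.leibniz_div, deriv_aeval_eq_implicitDeriv y v hv,
    deriv_aeval_eq_implicitDeriv y v hv]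
  simp only [smul_eq_mul, map_sub, map_mul, map_pow]
  ring

theorem IsRegularAlong.deriv (hv : y′ = aeval y v) (hp : Prime p) {u : L}
    (hu : IsRegularAlong y p u) : IsRegularAlong y p u′ := by
  obtain ⟨A, B, hB, rfl⟩ := hu
  exact ⟨_, B ^ 2, fun h => hB (hp.dvd_of_dvd_pow h), deriv_aeval_div hv A B⟩

theorem HasPoleOfOrder.deriv [CharZero K] (hy : Transcendental K y) (hv : y′ = aeval y v)
    (hp : Prime p) (hpD : ¬p ∣ implicitDeriv v p) {j : ℕ} (hj : j ≠ 0) {u : L}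
    (hu : HasPoleOfOrder y p j u) : HasPoleOfOrder y p (j + 1) u′ := by
  obtain ⟨A, B, hA, hB, rfl⟩ := hu
  obtain ⟨k, rfl⟩ := Nat.exists_eq_succ_of_ne_zero hj
  set D := implicitDeriv v
  -- the numerator of `u′` after cancelling `p ^ k`; modulo `p` it is `-(k + 1) A p′ B`
  set N := p * (D A * B - A * D B) - ((k : K[X]) + 1) * (A * D p * B) with hN_def
  have hunit : IsUnit ((k : K[X]) + 1) := by
    rw [← Nat.cast_succ, ← map_natCast C, isUnit_C]
    exact (Nat.cast_ne_zero.mpr k.succ_ne_zero).isUnit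
  have hN : ¬p ∣ N := by
    intro h
    have := (dvd_sub_right (dvd_mul_right p _)).mp h
    rcases hp.dvd_or_dvd this with h | h
    · exact hp.not_isUnit (isUnit_of_dvd_unit h hunit)
    rcases hp.dvd_or_dvd h with h | hB'
    · rcases hp.dvd_or_dvd h with hA' | hD
      exacts [hA hA', hpD hD]
    · exact hB hB'
  have hnum : D A * (p ^ (k + 1) * B) - A * D (p ^ (k + 1) * B) = p ^ k * N := by
    rw [Derivation.leibniz, Derivation.leibniz_pow]
    simp only [smul_eq_mul, nsmul_eq_mul, Nat.add_sub_cancel, hN_def]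
    push_cast
    ring
  have hden : (p ^ (k + 1) * B) ^ 2 = p ^ k * (p ^ (k + 1 + 1) * B ^ 2) := by ring
  refine ⟨N, B ^ 2, hN, fun h => hB (hp.dvd_of_dvd_pow h), ?_⟩
  rw [deriv_aeval_div hv, Nat.succ_eq_add_one, hnum, hden, map_mul, map_mul, mul_div_mul_left _ _
    (aeval_ne_zero_of_transcendental hy (pow_ne_zero k hp.ne_zero))]

theorem IsRegularAlong.iterate_deriv (hv : y′ = aeval y v) (hp : Prime p) {u : L}
    (hu : IsRegularAlong y p u) (n : ℕ) : IsRegularAlong y p ((fun x : L => x′)^[n] u) := by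
  induction n with
  | zero => exact hu
  | succ n ih => rw [Function.iterate_succ_apply']; exact ih.deriv hv hp

theorem HasPoleOfOrder.iterate_deriv [CharZero K] (hy : Transcendental K y)
    (hv : y′ = aeval y v) (hp : Prime p) (hpD : ¬p ∣ implicitDeriv v p) {j : ℕ} (hj : j ≠ 0)
    {u : L} (hu : HasPoleOfOrder y p j u) (n : ℕ) :
    HasPoleOfOrder y p (j + n) ((fun x : L => x′)^[n] u) := by
  induction n with
  | zero => exact hu
  | succ n ih =>
    rw [Function.iterate_succ_apply', ← add_assoc]
    exact ih.deriv hy hv hp hpD (by omega)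

theorem iterate_deriv_ne_of_hasPoleOfOrder [CharZero K] (hy : Transcendental K y)
    (hgen : K⟮y⟯ = ⊤) (hv : y′ = aeval y v) (hp : Irreducible p)
    (hpD : ¬p ∣ implicitDeriv v p) {j : ℕ} (hj : j ≠ 0) {g : L} (hg : HasPoleOfOrder y p j g)
    (η : L) : (fun x : L => x′)^[j] η ≠ g := by
  rintro rfl
  rcases isRegularAlong_or_hasPoleOfOrder hy hgen hp η with hη | ⟨i, hi, hη⟩
  · exact hg.not_isRegularAlong hy hp.prime hj (hη.iterate_deriv hv hp.prime j)
  · have := (hη.iterate_deriv hy hv hp.prime hpD hi j).unique hy hp.prime hg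
    omega

theorem not_dvd_implicitDeriv [CharZero K] [IsAlgClosed L] (hv : ∀ c : L, c′ ≠ aeval c v)
    (hp : Irreducible p) : ¬p ∣ implicitDeriv v p := by
  obtain ⟨c, hc⟩ := IsAlgClosed.exists_aeval_eq_zero L p (degree_pos_of_irreducible hp).ne'
  have hderiv := deriv_aeval_eq c p
  rw [hc, map_zero] at hderiv
  have heval : aeval c (implicitDeriv v p) = aeval c (derivative p) * (aeval c v - c′) := by
    simp only [implicitDeriv, Derivation.coe_add, Derivation.coe_smul, Pi.add_apply,
      Pi.smul_apply, Derivation.restrictScalars_apply, derivative'_apply, smul_eq_mul, map_add,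
      map_mul]
    linear_combination -hderiv
  rintro ⟨q, hq⟩
  rw [hq, map_mul, hc, zero_mul] at heval
  exact mul_ne_zero (hp.separable.aeval_derivative_ne_zero hc) (sub_ne_zero.mpr (hv c).symm)
    heval.symm

end Derivative

theorem stmt_12_general (F E Falg : Type*) [Field F] [Field E] [Field Falg]
    [Algebra F E] [Algebra F Falg] [IsAlgClosure F Falg] [CharZero F]
    (DF : F → F)
    (hFadd : ∀ a b : F, DF (a + b) = DF a + DF b)
    (hFmul : ∀ a b : F, DF (a * b) = a * DF b + DF a * b)
    (DE : E → E)
    (hEadd : ∀ a b : E, DE (a + b) = DE a + DE b)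
    (hEmul : ∀ a b : E, DE (a * b) = a * DE b + DE a * b)
    (hcompat : ∀ a : F, DE (algebraMap F E a) = algebraMap F E (DF a))
    (Dalg : Falg → Falg)
    (halgadd : ∀ a b : Falg, Dalg (a + b) = Dalg a + Dalg b)
    (halgmul : ∀ a b : Falg, Dalg (a * b) = a * Dalg b + Dalg a * b)
    (halgcompat : ∀ a : F, Dalg (algebraMap F Falg a) = algebraMap F Falg (DF a))
    (y : E) (hytr : Transcendental F y)
    (hgen : IntermediateField.adjoin F {y} = ⊤)
    (a b : F)
    (hy' : DE y = algebraMap F E a * y + algebraMap F E b)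
    (hc : ∀ c : Falg, algebraMap F Falg a * c + algebraMap F Falg b - Dalg c ≠ 0)
    (g : E) (hg : ∀ n : ℕ, 1 ≤ n → ∃ η : E, DE^[n] η = g) :
    g ∈ Algebra.adjoin F {y} := by
  let _ : Differential F := .ofLeibniz DF hFadd hFmul
  let _ : Differential E := .ofLeibniz DE hEadd hEmul
  let _ : Differential Falg := .ofLeibniz Dalg halgadd halgmul
  have : DifferentialAlgebra F E := ⟨hcompat⟩
  have : DifferentialAlgebra F Falg := ⟨halgcompat⟩
  have : IsAlgClosed Falg := IsAlgClosure.isAlgClosed F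
  have hv : y′ = aeval y (C a * X + C b) := by
    simp only [map_add, map_mul, aeval_C, aeval_X]; exact hy'
  have hvalg : ∀ c : Falg, c′ ≠ aeval c (C a * X + C b) := fun c h => by
    simp only [map_add, map_mul, aeval_C, aeval_X] at h
    exact hc c (by rw [show Dalg c = _ from h, sub_self])
  obtain ⟨A, B, hAB, hB, rfl⟩ := exists_isCoprime_aeval_div hytr hgen g
  obtain rfl : B = 1 := by
    by_contra hB1
    obtain ⟨p, hp, hpB⟩ :=
      WfDvdMonoid.exists_irreducible_factor (hB.isUnit_iff.not.mpr hB1) hB.ne_zero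
    obtain ⟨j, hj, hpole⟩ := hasPoleOfOrder_of_isCoprime (y := y) hAB hB.ne_zero hp hpB
    obtain ⟨η, hη⟩ := hg j (Nat.one_le_iff_ne_zero.mpr hj)
    exact iterate_deriv_ne_of_hasPoleOfOrder hytr hgen hv hp
      (not_dvd_implicitDeriv hvalg hp) hj hpole η hη
  simpa only [map_one, div_one] using aeval_mem_adjoin_singleton F y

/-- let `F(y)` be a differential field extension with `y`
transcendental, same constants, and `y' = a·y + b`; if `a·c + b − c' ≠ 0` for
every `c` in the algebraic closure of `F` (i.e. `(y−c)'/(y−c) ∉ F` for all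
such `c`), then every ∞-integrable element of `F(y)` lies in `F[y]`. -/
theorem stmt_12 (F E Falg : Type*) [Field F] [Field E] [Field Falg]
    [Algebra F E] [Algebra F Falg] [IsAlgClosure F Falg] [CharZero F]
    (DF : F → F)
    (hFadd : ∀ a b : F, DF (a + b) = DF a + DF b)
    (hFmul : ∀ a b : F, DF (a * b) = a * DF b + DF a * b)
    (DE : E → E)
    (hEadd : ∀ a b : E, DE (a + b) = DE a + DE b)
    (hEmul : ∀ a b : E, DE (a * b) = a * DE b + DE a * b)
    (hcompat : ∀ a : F, DE (algebraMap F E a) = algebraMap F E (DF a))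
    (Dalg : Falg → Falg)
    (halgadd : ∀ a b : Falg, Dalg (a + b) = Dalg a + Dalg b)
    (halgmul : ∀ a b : Falg, Dalg (a * b) = a * Dalg b + Dalg a * b)
    (halgcompat : ∀ a : F, Dalg (algebraMap F Falg a) = algebraMap F Falg (DF a))
    -- the field of constants of F is algebraically closed
    (hCalg : ∀ p : Polynomial F, 0 < p.degree → (∀ i, DF (p.coeff i) = 0) →
      ∃ r : F, DF r = 0 ∧ p.eval r = 0)
    (y : E) (hytr : Transcendental F y)
    (hgen : IntermediateField.adjoin F {y} = ⊤)
    (hconst : ∀ e : E, DE e = 0 → ∃ c : F, DF c = 0 ∧ algebraMap F E c = e)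
    (a b : F)
    (hy' : DE y = algebraMap F E a * y + algebraMap F E b)
    (hc : ∀ c : Falg, algebraMap F Falg a * c + algebraMap F Falg b - Dalg c ≠ 0)
    (g : E) (hg : ∀ n : ℕ, 1 ≤ n → ∃ η : E, DE^[n] η = g) :
    g ∈ Algebra.adjoin F {y} :=
  stmt_12_general F E Falg DF hFadd hFmul DE hEadd hEmul hcompat Dalg halgadd halgmul halgcompat y
    hytr hgen a b hy' hc g hg
end

section
/- Let F be a differential field of characteristic zero and F(y) a differential field extension with y transcendental over F, the same constants C, and y' = a·y for some nonzero a ∈ F. Then every element g ∈ F(y) that is ∞-integrable in F(y) lies in the Laurent polynomial ring F[y, y^{-1}]. -/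
open Polynomial

namespace Stmt13

variable {F E : Type*} [Field F] [Field E] [Algebra F E]

theorem DE_zero (DE : E → E) (hEadd : ∀ a b : E, DE (a + b) = DE a + DE b) : DE 0 = 0 := by
  have h := hEadd 0 0
  rw [add_zero] at h
  exact (left_eq_add.mp h)

theorem DE_one (DE : E → E) (hEmul : ∀ a b : E, DE (a * b) = a * DE b + DE a * b) : DE 1 = 0 := by
  have h := hEmul 1 1
  rw [mul_one, one_mul, mul_one] at h
  exact (left_eq_add.mp h)

theorem DE_div (DE : E → E) (hEmul : ∀ a b : E, DE (a * b) = a * DE b + DE a * b)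
    {v : E} (hv : v ≠ 0) (u : E) :
    DE (u / v) = (DE u * v - u * DE v) / v ^ 2 := by
  have h := hEmul (u / v) v
  rw [div_mul_cancel₀ u hv] at h
  rw [h]
  field_simp
  ring

theorem DE_pow (DE : E → E) (hEmul : ∀ a b : E, DE (a * b) = a * DE b + DE a * b)
    (x : E) : ∀ n : ℕ, DE (x ^ (n + 1)) = (n + 1 : E) * x ^ n * DE x := by
  intro n
  induction n with
  | zero => simp
  | succ k ih =>
    have : x ^ (k + 2) = x * x ^ (k + 1) := by ring
    rw [this, hEmul, ih]
    push_cast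
    ring

noncomputable def deltaF (DF : F → F) (r : F[X]) : F[X] :=
  r.sum fun i c => C (DF c) * X ^ i

noncomputable def delta (DF : F → F) (a : F) (r : F[X]) : F[X] :=
  C a * (X * derivative r) + deltaF DF r

theorem DF_zero (DF : F → F) (hFadd : ∀ a b : F, DF (a + b) = DF a + DF b) : DF 0 = 0 := by
  have h := hFadd 0 0
  rw [add_zero] at h
  exact (left_eq_add.mp h)

theorem DF_one (DF : F → F) (hFmul : ∀ a b : F, DF (a * b) = a * DF b + DF a * b) : DF 1 = 0 := by
  have h := hFmul 1 1
  rw [mul_one, one_mul, mul_one] at h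
  exact (left_eq_add.mp h)

theorem coeff_deltaF (DF : F → F) (hF0 : DF 0 = 0) (r : F[X]) (j : ℕ) :
    (deltaF DF r).coeff j = DF (r.coeff j) := by
  rw [deltaF, Polynomial.sum_def, finset_sum_coeff]
  simp only [coeff_C_mul, coeff_X_pow]
  rw [Finset.sum_eq_single j]
  · simp
  · intro i _ hij
    simp [Ne.symm hij]
  · intro hj
    rw [Polynomial.notMem_support_iff.mp hj, hF0]
    simp

theorem deltaF_add (DF : F → F) (hFadd : ∀ a b : F, DF (a + b) = DF a + DF b)
    (p q : F[X]) : deltaF DF (p + q) = deltaF DF p + deltaF DF q := by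
  have hF0 := DF_zero DF hFadd
  ext j
  simp [coeff_deltaF DF hF0, hFadd]

theorem deltaF_monomial (DF : F → F) (hFadd : ∀ a b : F, DF (a + b) = DF a + DF b)
    (i : ℕ) (c : F) : deltaF DF (monomial i c) = monomial i (DF c) := by
  have hF0 := DF_zero DF hFadd
  ext j
  rw [coeff_deltaF DF hF0, coeff_monomial, coeff_monomial]
  by_cases h : i = j <;> simp [h, hF0]

theorem X_mul_derivative_monomial (i : ℕ) (c : F) :
    X * derivative (monomial i c) = monomial i (c * i) := by
  rw [derivative_monomial]
  cases i with
  | zero => simp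
  | succ k =>
    rw [X_mul_monomial]
    simp

theorem aeval_inj {y : E} (hytr : Transcendental F y) :
    Function.Injective fun r : F[X] => aeval y r := by
  intro p q h
  by_contra hne
  refine hytr ⟨p - q, sub_ne_zero.mpr hne, ?_⟩
  rw [map_sub, sub_eq_zero]
  exact h

theorem DE_y_pow (DE : E → E) (hEadd : ∀ a b : E, DE (a + b) = DE a + DE b)
    (hEmul : ∀ a b : E, DE (a * b) = a * DE b + DE a * b)
    {y : E} {a : F} (hy' : DE y = algebraMap F E a * y) (i : ℕ) :
    DE (y ^ i) = (i : E) * algebraMap F E a * y ^ i := by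
  cases i with
  | zero => simp [DE_one DE hEmul]
  | succ k =>
    rw [DE_pow DE hEmul y k, hy']
    push_cast
    ring

theorem DE_aeval (DF : F → F) (hFadd : ∀ a b : F, DF (a + b) = DF a + DF b)
    (DE : E → E) (hEadd : ∀ a b : E, DE (a + b) = DE a + DE b)
    (hEmul : ∀ a b : E, DE (a * b) = a * DE b + DE a * b)
    (hcompat : ∀ c : F, DE (algebraMap F E c) = algebraMap F E (DF c))
    {y : E} {a : F} (hy' : DE y = algebraMap F E a * y) (r : F[X]) :
    DE (aeval y r) = aeval y (delta DF a r) := by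
  induction r using Polynomial.induction_on' with
  | add p q hp hq =>
    rw [map_add, hEadd, hp, hq, ← map_add]
    congr 1
    simp only [delta, derivative_add, deltaF_add DF hFadd]
    ring
  | monomial i c =>
    rw [delta, X_mul_derivative_monomial, deltaF_monomial DF hFadd]
    rw [aeval_monomial, hEmul, hcompat, DE_y_pow DE hEadd hEmul hy' i]
    rw [map_add, map_mul, aeval_C, aeval_monomial, aeval_monomial, map_mul]
    push_cast
    ring

theorem delta_mul (DF : F → F) (hFadd : ∀ a b : F, DF (a + b) = DF a + DF b)
    (DE : E → E) (hEadd : ∀ a b : E, DE (a + b) = DE a + DE b)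
    (hEmul : ∀ a b : E, DE (a * b) = a * DE b + DE a * b)
    (hcompat : ∀ c : F, DE (algebraMap F E c) = algebraMap F E (DF c))
    {y : E} (hytr : Transcendental F y) {a : F} (hy' : DE y = algebraMap F E a * y)
    (u v : F[X]) :
    delta DF a (u * v) = u * delta DF a v + delta DF a u * v := by
  apply aeval_inj hytr
  show aeval y _ = aeval y _
  rw [← DE_aeval DF hFadd DE hEadd hEmul hcompat hy', map_mul, hEmul, map_add, map_mul, map_mul,
    ← DE_aeval DF hFadd DE hEadd hEmul hcompat hy', ← DE_aeval DF hFadd DE hEadd hEmul hcompat hy']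

theorem delta_pow (DF : F → F) (hFadd : ∀ a b : F, DF (a + b) = DF a + DF b)
    (DE : E → E) (hEadd : ∀ a b : E, DE (a + b) = DE a + DE b)
    (hEmul : ∀ a b : E, DE (a * b) = a * DE b + DE a * b)
    (hcompat : ∀ c : F, DE (algebraMap F E c) = algebraMap F E (DF c))
    {y : E} (hytr : Transcendental F y) {a : F} (hy' : DE y = algebraMap F E a * y)
    (q : F[X]) : ∀ m : ℕ,
    delta DF a (q ^ (m + 1)) = ((m : F[X]) + 1) * q ^ m * delta DF a q := by
  intro m
  induction m with
  | zero => simp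
  | succ k ih =>
    have h2 : q ^ (k + 2) = q * q ^ (k + 1) := by ring
    rw [h2, delta_mul DF hFadd DE hEadd hEmul hcompat hytr hy', ih]
    push_cast
    ring


theorem key [CharZero F] (DF : F → F)
    (hFadd : ∀ a b : F, DF (a + b) = DF a + DF b)
    (hFmul : ∀ a b : F, DF (a * b) = a * DF b + DF a * b)
    (DE : E → E) (hEadd : ∀ a b : E, DE (a + b) = DE a + DE b)
    (hEmul : ∀ a b : E, DE (a * b) = a * DE b + DE a * b)
    (hcompat : ∀ c : F, DE (algebraMap F E c) = algebraMap F E (DF c))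
    {y : E} (hytr : Transcendental F y)
    (hconst : ∀ e : E, DE e = 0 → ∃ c : F, DF c = 0 ∧ algebraMap F E c = e)
    {a : F} (ha : a ≠ 0) (hy' : DE y = algebraMap F E a * y)
    {q : F[X]} (hq : q.Monic) (hirr : Irreducible q) (hqX : q ≠ X) :
    ¬ q ∣ delta DF a q := by
  have hF0 := DF_zero DF hFadd
  set d := q.natDegree with hd
  have hd1 : 1 ≤ d := by
    rcases Nat.eq_zero_or_pos d with h0 | h1
    · exact absurd (hq.natDegree_eq_zero.mp h0 ▸ isUnit_one) hirr.not_isUnit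
    · exact h1
  obtain ⟨e, he⟩ : ∃ e, d = e + 1 := ⟨d - 1, by omega⟩
  -- degree bound
  have hdeg : (delta DF a q).natDegree ≤ d := by
    refine natDegree_add_le_of_degree_le ?_ ?_
    · refine (natDegree_C_mul_le _ _).trans ((natDegree_mul_le).trans ?_)
      have := natDegree_derivative_le q
      simp only [natDegree_X]
      omega
    · rw [natDegree_le_iff_coeff_eq_zero]
      intro N hN
      rw [coeff_deltaF DF hF0, coeff_eq_zero_of_natDegree_lt hN, hF0]
  -- top coefficient
  have hcoeff : (delta DF a q).coeff d = a * d := by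
    rw [delta, coeff_add, coeff_deltaF DF hF0, coeff_natDegree, hq.leadingCoeff, DF_one DF hFmul,
      add_zero, coeff_C_mul, he, coeff_X_mul, coeff_derivative]
    have h1 : q.coeff (e + 1) = 1 := by rw [← he]; exact hq.coeff_natDegree
    rw [h1]
    push_cast
    ring
  have had : a * (d : F) ≠ 0 := by
    have : (d : F) ≠ 0 := Nat.cast_ne_zero.mpr (by omega)
    exact mul_ne_zero ha this
  -- suppose q ∣ delta q
  intro hdvd
  obtain ⟨t, ht⟩ := hdvd
  have hq0 : q ≠ 0 := hq.ne_zero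
  have htne : t ≠ 0 := by
    rintro rfl
    rw [mul_zero] at ht
    rw [ht, coeff_zero] at hcoeff
    exact had hcoeff.symm
  have htdeg : t.natDegree = 0 := by
    have := natDegree_mul hq0 htne
    rw [← ht] at this
    omega
  obtain ⟨c0, rfl⟩ := Polynomial.natDegree_eq_zero.mp htdeg
  have hc0 : c0 = a * d := by
    rw [ht, coeff_mul_C, coeff_natDegree, hq.leadingCoeff, one_mul] at hcoeff
    exact hcoeff
  subst hc0
  -- now DE (aeval y q) = algebraMap (a*d) * aeval y q
  have hDq : DE (aeval y q) = algebraMap F E (a * d) * aeval y q := by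
    rw [DE_aeval DF hFadd DE hEadd hEmul hcompat hy', ht, map_mul, aeval_C, mul_comm]
  have hy0 : y ≠ 0 := by
    intro h0
    have : (X : F[X]) = 0 := aeval_inj hytr (by simp [h0] : (fun r : F[X] => aeval y r) X = (fun r : F[X] => aeval y r) 0)
    exact X_ne_zero this
  have hyd : (y : E) ^ d ≠ 0 := pow_ne_zero _ hy0
  have hz : DE (aeval y q / y ^ d) = 0 := by
    rw [DE_div DE hEmul hyd, hDq, DE_y_pow DE hEadd hEmul hy' d]
    rw [map_mul]
    push_cast
    field_simp
    ring
  obtain ⟨c, hc0, hc⟩ := hconst _ hz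
  have hcy : aeval y q = algebraMap F E c * y ^ d := by
    rw [hc]
    field_simp
  have hqc : q = C c * X ^ d := by
    apply aeval_inj hytr
    show aeval y _ = aeval y _
    rw [hcy, map_mul, aeval_C, map_pow, aeval_X]
  have hc1 : c = 1 := by
    have := hq.leadingCoeff
    rw [hqc, leadingCoeff_C_mul_X_pow] at this
    exact this
  subst hc1
  rw [map_one, one_mul] at hqc
  -- q = X ^ d with q irreducible forces d = 1
  have hd1' : d = 1 := by
    by_contra hne
    have hd2 : 2 ≤ d := by omega
    have : q = X * X ^ (d - 1) := by
      rw [hqc, ← pow_succ']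
      congr 1
      omega
    rcases hirr.isUnit_or_isUnit this with hu | hu
    · exact not_isUnit_X hu
    · have : IsUnit (X : F[X]) := by
        have hne0 : d - 1 ≠ 0 := by omega
        exact (isUnit_pow_iff hne0).mp hu
      exact not_isUnit_X this
  rw [hd1', pow_one] at hqc
  exact hqX hqc


/-- `x` has no pole at `q` -/
def good (q : F[X]) (y : E) (x : E) : Prop :=
  x = 0 ∨ ∃ p s : F[X], ¬ q ∣ s ∧ x = aeval y p / aeval y s

/-- `x` has a pole of order exactly `m` at `q` -/
def OrdNeg (q : F[X]) (y : E) (m : ℕ) (x : E) : Prop :=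
  ∃ p s : F[X], ¬ q ∣ p ∧ ¬ q ∣ s ∧ x = aeval y p / aeval y (s * q ^ m)

theorem aeval_ne {y : E} (hytr : Transcendental F y) {r : F[X]} (hr : r ≠ 0) :
    aeval y r ≠ 0 := by
  intro h
  apply hr
  apply aeval_inj hytr
  show aeval y r = aeval y 0
  simpa using h

theorem cross {y : E} (hytr : Transcendental F y) {p s p' s' : F[X]} (hs : s ≠ 0) (hs' : s' ≠ 0)
    (h : aeval y p / aeval y s = aeval y p' / aeval y s') : p * s' = p' * s := by
  rw [div_eq_div_iff (aeval_ne hytr hs) (aeval_ne hytr hs')] at h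
  apply aeval_inj hytr
  show aeval y _ = aeval y _
  rw [map_mul, map_mul]
  exact h

theorem good_or_ordneg {y : E} (hytr : Transcendental F y) {q : F[X]} (hirr : Irreducible q)
    (p₀ s₀ : F[X]) :
    good q y (aeval y p₀ / aeval y s₀) ∨
      ∃ m, 1 ≤ m ∧ OrdNeg q y m (aeval y p₀ / aeval y s₀) := by
  by_cases hp0 : p₀ = 0
  · left; left; simp [hp0]
  by_cases hs0 : s₀ = 0
  · left; left; simp [hs0]
  obtain ⟨j, s, hjs, hseq⟩ := WfDvdMonoid.max_power_factor hs0 hirr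
  obtain ⟨i, p, hip, hpeq⟩ := WfDvdMonoid.max_power_factor hp0 hirr
  subst hseq; subst hpeq
  have hq0 : q ≠ 0 := hirr.ne_zero
  have hA : aeval y q ≠ 0 := aeval_ne hytr hq0
  rcases le_or_gt j i with hji | hij
  · left; right
    obtain ⟨k, rfl⟩ : ∃ k, i = j + k := ⟨i - j, by omega⟩
    refine ⟨q ^ k * p, s, hjs, ?_⟩
    have hsne : s ≠ 0 := fun h => hjs (h ▸ dvd_zero q)
    have hsA : aeval y s ≠ 0 := aeval_ne hytr hsne
    have hdenA : aeval y (q ^ j * s) ≠ 0 :=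
      aeval_ne hytr (mul_ne_zero (pow_ne_zero _ hq0) hsne)
    rw [div_eq_div_iff hdenA hsA, ← map_mul, ← map_mul]
    congr 1
    ring
  · right
    obtain ⟨k, hk1, rfl⟩ : ∃ k, 1 ≤ k ∧ j = i + k := ⟨j - i, by omega, by omega⟩
    refine ⟨k, hk1, p, s, hip, hjs, ?_⟩
    have hsne : s ≠ 0 := fun h => hjs (h ▸ dvd_zero q)
    have h1 : aeval y (q ^ (i + k) * s) ≠ 0 :=
      aeval_ne hytr (mul_ne_zero (pow_ne_zero _ hq0) hsne)
    have h2 : aeval y (s * q ^ k) ≠ 0 :=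
      aeval_ne hytr (mul_ne_zero hsne (pow_ne_zero _ hq0))
    rw [div_eq_div_iff h1 h2, ← map_mul, ← map_mul]
    congr 1
    ring

theorem not_good_of_ordneg {y : E} (hytr : Transcendental F y) {q : F[X]}
    (hirr : Irreducible q) {m : ℕ} {x : E} (hm : 1 ≤ m)
    (ho : OrdNeg q y m x) : ¬ good q y x := by
  obtain ⟨p, s, hp, hs, rfl⟩ := ho
  have hqprime : Prime q := hirr.prime
  have hs0 : s ≠ 0 := fun h => hs (h ▸ dvd_zero q)
  have hq0 : q ≠ 0 := hirr.ne_zero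
  have hp0 : p ≠ 0 := fun h => hp (h ▸ dvd_zero q)
  have hden : s * q ^ m ≠ 0 := mul_ne_zero hs0 (pow_ne_zero _ hq0)
  rintro (h0 | ⟨p', s', hs', heq⟩)
  · rw [_root_.div_eq_zero_iff] at h0
    rcases h0 with h0 | h0
    · exact aeval_ne hytr hp0 h0
    · exact aeval_ne hytr hden h0
  · have hs'0 : s' ≠ 0 := fun h => hs' (h ▸ dvd_zero q)
    have hcr := cross hytr hden hs'0 heq
    -- p * s' = p' * (s * q ^ m)
    have hdvd : q ∣ p * s' := by
      refine ⟨p' * s * q ^ (m - 1), ?_⟩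
      rw [hcr]
      have : q ^ m = q * q ^ (m - 1) := by
        conv_lhs => rw [show m = 1 + (m - 1) by omega]
        rw [pow_add, pow_one]
      rw [this]; ring
    rcases hqprime.2.2 _ _ hdvd with h | h
    · exact hp h
    · exact hs' h

theorem ordneg_unique_le {y : E} (hytr : Transcendental F y) {q : F[X]}
    (hirr : Irreducible q) {m m' : ℕ} {x : E}
    (ho : OrdNeg q y m x) (ho' : OrdNeg q y m' x) (hle : m ≤ m') : m = m' := by
  obtain ⟨p, s, hp, hs, rfl⟩ := ho
  obtain ⟨p', s', hp', hs', heq⟩ := ho'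
  have hqprime : Prime q := hirr.prime
  have hq0 : q ≠ 0 := hirr.ne_zero
  have hs0 : s ≠ 0 := fun h => hs (h ▸ dvd_zero q)
  have hs'0 : s' ≠ 0 := fun h => hs' (h ▸ dvd_zero q)
  have hden : s * q ^ m ≠ 0 := mul_ne_zero hs0 (pow_ne_zero _ hq0)
  have hden' : s' * q ^ m' ≠ 0 := mul_ne_zero hs'0 (pow_ne_zero _ hq0)
  have hcr := cross hytr hden hden' heq
  -- p * (s' * q ^ m') = p' * (s * q ^ m)
  by_contra hne
  have hk : m' = m + (m' - m) ∧ 1 ≤ m' - m := ⟨by omega, by omega⟩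
  have hcr2 : q ^ m * (p * s' * q ^ (m' - m)) = q ^ m * (p' * s) := by
    rw [show q ^ m * (p * s' * q ^ (m' - m)) = p * (s' * (q ^ m * q ^ (m' - m))) by ring, ← pow_add]
    rw [show m + (m' - m) = m' by omega]
    rw [hcr]; ring
  have hcancel : p * s' * q ^ (m' - m) = p' * s :=
    mul_left_cancel₀ (pow_ne_zero m hq0) hcr2
  have hdvd : q ∣ p' * s := by
    refine ⟨p * s' * q ^ (m' - m - 1), ?_⟩
    rw [← hcancel]
    conv_lhs => rw [show m' - m = 1 + (m' - m - 1) by omega]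
    rw [pow_add, pow_one]; ring
  rcases hqprime.2.2 _ _ hdvd with h | h
  · exact hp' h
  · exact hs h

theorem ordneg_unique {y : E} (hytr : Transcendental F y) {q : F[X]}
    (hirr : Irreducible q) {m m' : ℕ} {x : E}
    (ho : OrdNeg q y m x) (ho' : OrdNeg q y m' x) : m = m' := by
  rcases le_total m m' with h | h
  · exact ordneg_unique_le hytr hirr ho ho' h
  · exact (ordneg_unique_le hytr hirr ho' ho h).symm


theorem good_D (DF : F → F) (hFadd : ∀ a b : F, DF (a + b) = DF a + DF b)
    (DE : E → E) (hEadd : ∀ a b : E, DE (a + b) = DE a + DE b)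
    (hEmul : ∀ a b : E, DE (a * b) = a * DE b + DE a * b)
    (hcompat : ∀ c : F, DE (algebraMap F E c) = algebraMap F E (DF c))
    {y : E} (hytr : Transcendental F y) {a : F} (hy' : DE y = algebraMap F E a * y)
    {q : F[X]} (hirr : Irreducible q) {x : E}
    (hgx : good q y x) : good q y (DE x) := by
  rcases hgx with rfl | ⟨p, s, hs, rfl⟩
  · left; exact DE_zero DE hEadd
  · right
    have hs0 : s ≠ 0 := fun h => hs (h ▸ dvd_zero q)
    refine ⟨delta DF a p * s - p * delta DF a s, s ^ 2,
      fun h => hs (hirr.prime.dvd_of_dvd_pow h), ?_⟩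
    rw [DE_div DE hEmul (aeval_ne hytr hs0),
      DE_aeval DF hFadd DE hEadd hEmul hcompat hy',
      DE_aeval DF hFadd DE hEadd hEmul hcompat hy',
      map_sub, map_mul, map_mul, map_pow]

theorem ordneg_D [CharZero F] (DF : F → F)
    (hFadd : ∀ a b : F, DF (a + b) = DF a + DF b)
    (hFmul : ∀ a b : F, DF (a * b) = a * DF b + DF a * b)
    (DE : E → E) (hEadd : ∀ a b : E, DE (a + b) = DE a + DE b)
    (hEmul : ∀ a b : E, DE (a * b) = a * DE b + DE a * b)
    (hcompat : ∀ c : F, DE (algebraMap F E c) = algebraMap F E (DF c))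
    {y : E} (hytr : Transcendental F y)
    (hconst : ∀ e : E, DE e = 0 → ∃ c : F, DF c = 0 ∧ algebraMap F E c = e)
    {a : F} (ha : a ≠ 0) (hy' : DE y = algebraMap F E a * y)
    {q : F[X]} (hq : q.Monic) (hirr : Irreducible q) (hqX : q ≠ X)
    {m : ℕ} {x : E} (hm : 1 ≤ m) (ho : OrdNeg q y m x) :
    OrdNeg q y (m + 1) (DE x) := by
  obtain ⟨e, rfl⟩ : ∃ e, m = e + 1 := ⟨m - 1, by omega⟩
  obtain ⟨p, s, hp, hs, rfl⟩ := ho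
  have hδ : ¬ q ∣ delta DF a q :=
    key DF hFadd hFmul DE hEadd hEmul hcompat hytr hconst ha hy' hq hirr hqX
  have hqprime : Prime q := hirr.prime
  have hq0 : q ≠ 0 := hirr.ne_zero
  have hs0 : s ≠ 0 := fun h => hs (h ▸ dvd_zero q)
  have hden : s * q ^ (e + 1) ≠ 0 := mul_ne_zero hs0 (pow_ne_zero _ hq0)
  set w := q * (delta DF a p * s - p * delta DF a s) - ((e : F[X]) + 1) * (p * s * delta DF a q)
    with hw
  refine ⟨w, s ^ 2, ?_, fun h => hs (hqprime.dvd_of_dvd_pow h), ?_⟩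
  · intro hdvd
    have h2 : q ∣ ((e : F[X]) + 1) * (p * s * delta DF a q) := by
      have : ((e : F[X]) + 1) * (p * s * delta DF a q)
          = q * (delta DF a p * s - p * delta DF a s) - w := by rw [hw]; ring
      rw [this]
      exact dvd_sub (Dvd.intro _ rfl) hdvd
    rcases hqprime.2.2 _ _ h2 with h | h
    · have hu : IsUnit ((e : F[X]) + 1) := by
        have hC : ((e : F[X]) + 1) = C ((e : F) + 1) := by rw [map_add, map_one, Polynomial.C_eq_natCast]
        rw [hC]
        exact isUnit_C.mpr (isUnit_iff_ne_zero.mpr (Nat.cast_add_one_ne_zero e))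
      exact hqprime.not_isUnit (isUnit_of_dvd_unit h hu)
    · rcases hqprime.2.2 _ _ h with h' | h'
      · rcases hqprime.2.2 _ _ h' with h'' | h''
        · exact hp h''
        · exact hs h''
      · exact hδ h'
  · rw [DE_div DE hEmul (aeval_ne hytr hden),
      DE_aeval DF hFadd DE hEadd hEmul hcompat hy',
      DE_aeval DF hFadd DE hEadd hEmul hcompat hy']
    have hnum : delta DF a p * (s * q ^ (e + 1)) - p * delta DF a (s * q ^ (e + 1))
        = q ^ e * w := by
      rw [delta_mul DF hFadd DE hEadd hEmul hcompat hytr hy',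
        delta_pow DF hFadd DE hEadd hEmul hcompat hytr hy' q e, hw]
      ring
    have hden2 : (s * q ^ (e + 1)) ^ 2 = q ^ e * (s ^ 2 * q ^ (e + 1 + 1)) := by ring
    rw [← map_mul, ← map_mul, ← map_sub, ← map_pow, hnum, hden2, map_mul, map_mul,
      mul_div_mul_left _ _ (aeval_ne hytr (pow_ne_zero e hq0))]

theorem good_iter (DF : F → F) (hFadd : ∀ a b : F, DF (a + b) = DF a + DF b)
    (DE : E → E) (hEadd : ∀ a b : E, DE (a + b) = DE a + DE b)
    (hEmul : ∀ a b : E, DE (a * b) = a * DE b + DE a * b)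
    (hcompat : ∀ c : F, DE (algebraMap F E c) = algebraMap F E (DF c))
    {y : E} (hytr : Transcendental F y) {a : F} (hy' : DE y = algebraMap F E a * y)
    {q : F[X]} (hirr : Irreducible q) {x : E}
    (hgx : good q y x) : ∀ j : ℕ, good q y (DE^[j] x) := by
  intro j
  induction j with
  | zero => exact hgx
  | succ k ih =>
    rw [Function.iterate_succ_apply']
    exact good_D DF hFadd DE hEadd hEmul hcompat hytr hy' hirr ih

theorem ordneg_iter [CharZero F] (DF : F → F)
    (hFadd : ∀ a b : F, DF (a + b) = DF a + DF b)
    (hFmul : ∀ a b : F, DF (a * b) = a * DF b + DF a * b)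
    (DE : E → E) (hEadd : ∀ a b : E, DE (a + b) = DE a + DE b)
    (hEmul : ∀ a b : E, DE (a * b) = a * DE b + DE a * b)
    (hcompat : ∀ c : F, DE (algebraMap F E c) = algebraMap F E (DF c))
    {y : E} (hytr : Transcendental F y)
    (hconst : ∀ e : E, DE e = 0 → ∃ c : F, DF c = 0 ∧ algebraMap F E c = e)
    {a : F} (ha : a ≠ 0) (hy' : DE y = algebraMap F E a * y)
    {q : F[X]} (hq : q.Monic) (hirr : Irreducible q) (hqX : q ≠ X)
    {m : ℕ} {x : E} (hm : 1 ≤ m) (ho : OrdNeg q y m x) :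
    ∀ j : ℕ, OrdNeg q y (m + j) (DE^[j] x) := by
  intro j
  induction j with
  | zero => exact ho
  | succ k ih =>
    rw [Function.iterate_succ_apply']
    have := ordneg_D DF hFadd hFmul DE hEadd hEmul hcompat hytr hconst ha hy' hq hirr hqX
      (by omega : 1 ≤ m + k) ih
    rwa [show m + k + 1 = m + (k + 1) from by omega] at this


theorem no_pole [CharZero F] (DF : F → F)
    (hFadd : ∀ a b : F, DF (a + b) = DF a + DF b)
    (hFmul : ∀ a b : F, DF (a * b) = a * DF b + DF a * b)
    (DE : E → E) (hEadd : ∀ a b : E, DE (a + b) = DE a + DE b)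
    (hEmul : ∀ a b : E, DE (a * b) = a * DE b + DE a * b)
    (hcompat : ∀ c : F, DE (algebraMap F E c) = algebraMap F E (DF c))
    {y : E} (hytr : Transcendental F y)
    (hgen : IntermediateField.adjoin F {y} = ⊤)
    (hconst : ∀ e : E, DE e = 0 → ∃ c : F, DF c = 0 ∧ algebraMap F E c = e)
    {a : F} (ha : a ≠ 0) (hy' : DE y = algebraMap F E a * y)
    {q : F[X]} (hq : q.Monic) (hirr : Irreducible q) (hqX : q ≠ X)
    (g : E) (hg : ∀ n : ℕ, 1 ≤ n → ∃ η : E, DE^[n] η = g) :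
    good q y g := by
  have hrepAll : ∀ z : E, ∃ p₀ s₀ : F[X], z = aeval y p₀ / aeval y s₀ := by
    intro z
    have hz : z ∈ IntermediateField.adjoin F {y} := by rw [hgen]; exact IntermediateField.mem_top
    exact (IntermediateField.mem_adjoin_simple_iff F z).mp hz
  obtain ⟨p₀, s₀, hrep⟩ := hrepAll g
  rw [hrep]
  rcases good_or_ordneg hytr hirr p₀ s₀ with hgood | ⟨m, hm, ho⟩
  · exact hgood
  · exfalso
    rw [← hrep] at ho
    obtain ⟨η, hη⟩ := hg m hm
    obtain ⟨p₁, s₁, hrep1⟩ := hrepAll η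
    rcases good_or_ordneg hytr hirr p₁ s₁ with hgood1 | ⟨m', hm', ho1⟩
    · rw [← hrep1] at hgood1
      have hgg := good_iter DF hFadd DE hEadd hEmul hcompat hytr hy' hirr hgood1 m
      rw [hη] at hgg
      exact not_good_of_ordneg hytr hirr hm ho hgg
    · rw [← hrep1] at ho1
      have hoo := ordneg_iter DF hFadd hFmul DE hEadd hEmul hcompat hytr hconst ha hy'
        hq hirr hqX hm' ho1 m
      rw [hη] at hoo
      have := ordneg_unique hytr hirr ho hoo
      omega

theorem const_case {y : E} {s p : F[X]} (hs0 : s ≠ 0) (hdeg : s.natDegree = 0) :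
    aeval y p / aeval y s ∈ Algebra.adjoin F {y, y⁻¹} := by
  obtain ⟨c, rfl⟩ := Polynomial.natDegree_eq_zero.mp hdeg
  have hc : c ≠ 0 := fun h => hs0 (by rw [h, map_zero])
  have heq : aeval y p / aeval y (C c) = aeval y (C c⁻¹ * p) := by
    rw [map_mul, aeval_C, aeval_C, map_inv₀, div_eq_inv_mul]
  rw [heq]
  refine Algebra.adjoin_mono ?_ (Polynomial.aeval_mem_adjoin_singleton F y)
  exact Set.singleton_subset_iff.mpr (Set.mem_insert y _)

theorem mem_laurent {y : E} (hytr : Transcendental F y) :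
    ∀ (n : ℕ) (s p : F[X]), s ≠ 0 → s.natDegree ≤ n →
    (∀ q : F[X], q.Monic → Irreducible q → q ≠ X →
      good q y (aeval y p / aeval y s)) →
    aeval y p / aeval y s ∈ Algebra.adjoin F {y, y⁻¹} := by
  have hy0 : y ≠ 0 := by
    intro h0
    have hX : (X : F[X]) = 0 := by
      apply aeval_inj hytr
      show aeval y X = aeval y 0
      simp [h0]
    exact X_ne_zero hX
  intro n
  induction n with
  | zero =>
    intro s p hs0 hdeg _
    exact const_case hs0 (by omega)
  | succ n ih =>
    intro s p hs0 hdeg hgood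
    by_cases hdeg0 : s.natDegree = 0
    · exact const_case hs0 hdeg0
    -- s is not a unit; extract a monic irreducible factor q
    have hnotunit : ¬ IsUnit s := by
      intro hu
      exact hdeg0 (Polynomial.natDegree_eq_zero_of_isUnit hu)
    obtain ⟨q₀, hq₀irr, hq₀dvd⟩ := WfDvdMonoid.exists_irreducible_factor hnotunit hs0
    have hq₀0 : q₀ ≠ 0 := hq₀irr.ne_zero
    obtain ⟨q, hqdef⟩ : ∃ q : F[X], q = q₀ * C q₀.leadingCoeff⁻¹ := ⟨_, rfl⟩
    have hqmonic : q.Monic := by rw [hqdef]; exact monic_mul_leadingCoeff_inv hq₀0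
    have hCunit : IsUnit (C q₀.leadingCoeff⁻¹) :=
      isUnit_C.mpr (isUnit_iff_ne_zero.mpr (inv_ne_zero (leadingCoeff_ne_zero.mpr hq₀0)))
    have hassoc : Associated q₀ q := ⟨hCunit.unit, by rw [IsUnit.unit_spec, ← hqdef]⟩
    have hirr : Irreducible q := hassoc.irreducible hq₀irr
    have hq0 : q ≠ 0 := hirr.ne_zero
    have hqdvd : q ∣ s := dvd_trans hassoc.symm.dvd hq₀dvd
    obtain ⟨s₁, hs₁⟩ := hqdvd
    have hs₁0 : s₁ ≠ 0 := by
      intro h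
      rw [h, mul_zero] at hs₁
      exact hs0 hs₁
    have hqd1 : 1 ≤ q.natDegree := by
      rcases Nat.eq_zero_or_pos q.natDegree with h0 | h1
      · exact absurd (hqmonic.natDegree_eq_zero.mp h0 ▸ isUnit_one) hirr.not_isUnit
      · exact h1
    have hdegs : s.natDegree = q.natDegree + s₁.natDegree := by
      rw [hs₁, natDegree_mul hq0 hs₁0]
    have hdegs₁ : s₁.natDegree ≤ n := by omega
    by_cases hqX : q = X
    · -- s = X * s₁ : pull out a power of y
      rw [hqX] at hs₁
      have heq : aeval y p / aeval y s = (aeval y p / aeval y s₁) * y⁻¹ := by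
        rw [hs₁, map_mul, aeval_X, mul_comm, ← div_div, div_eq_mul_inv]
      have heq' : aeval y p / aeval y s₁ = (aeval y p / aeval y s) * y := by
        rw [heq, mul_assoc, inv_mul_cancel₀ hy0, mul_one]
      rw [heq]
      refine mul_mem ?_ (Algebra.subset_adjoin (Set.mem_insert_of_mem _ rfl))
      refine ih s₁ p hs₁0 hdegs₁ ?_
      intro q' hq'm hq'irr hq'X
      rcases hgood q' hq'm hq'irr hq'X with h0 | ⟨p₂, s₂, hs₂, heq2⟩
      · left
        rw [heq', h0, zero_mul]
      · right
        refine ⟨p₂ * X, s₂, hs₂, ?_⟩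
        rw [heq', heq2, map_mul, aeval_X, div_mul_eq_mul_div]
    · -- q ≠ X : cancel q from the fraction
      rcases hgood q hqmonic hirr hqX with h0 | ⟨p₂, s₂, hs₂, heq2⟩
      · rw [h0]; exact Subalgebra.zero_mem _
      · have hs₂0 : s₂ ≠ 0 := fun h => hs₂ (h ▸ dvd_zero q)
        have hcr := cross hytr hs0 hs₂0 heq2
        have hdvd : q ∣ p * s₂ := by
          refine ⟨p₂ * s₁, ?_⟩
          rw [hcr, hs₁]; ring
        have hqp : q ∣ p := by
          rcases hirr.prime.2.2 _ _ hdvd with h | h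
          · exact h
          · exact absurd h hs₂
        obtain ⟨p₃, hp₃⟩ := hqp
        have heq3 : aeval y p / aeval y s = aeval y p₃ / aeval y s₁ := by
          rw [hp₃, hs₁, map_mul, map_mul, mul_div_mul_left _ _ (aeval_ne hytr hq0)]
        rw [heq3]
        refine ih s₁ p₃ hs₁0 hdegs₁ ?_
        intro q' hq'm hq'irr hq'X
        rw [← heq3]
        exact hgood q' hq'm hq'irr hq'X

end Stmt13

/-- let `F(y)` be a differential field extension with `y`
transcendental, same constants, and `y' = a·y` for some nonzero `a ∈ F`
(an exponential extension); then every ∞-integrable element of `F(y)` lies in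
the Laurent polynomial ring `F[y, y⁻¹]`. -/
theorem stmt_13 (F E : Type*) [Field F] [Field E] [Algebra F E] [CharZero F]
    (DF : F → F)
    (hFadd : ∀ a b : F, DF (a + b) = DF a + DF b)
    (hFmul : ∀ a b : F, DF (a * b) = a * DF b + DF a * b)
    (DE : E → E)
    (hEadd : ∀ a b : E, DE (a + b) = DE a + DE b)
    (hEmul : ∀ a b : E, DE (a * b) = a * DE b + DE a * b)
    (hcompat : ∀ a : F, DE (algebraMap F E a) = algebraMap F E (DF a))
    (y : E) (hytr : Transcendental F y)
    (hgen : IntermediateField.adjoin F {y} = ⊤)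
    (hconst : ∀ e : E, DE e = 0 → ∃ c : F, DF c = 0 ∧ algebraMap F E c = e)
    (a : F) (ha : a ≠ 0)
    (hy' : DE y = algebraMap F E a * y)
    (g : E) (hg : ∀ n : ℕ, 1 ≤ n → ∃ η : E, DE^[n] η = g) :
    g ∈ Algebra.adjoin F {y, y⁻¹} := by
  obtain ⟨p₀, s₀, hrep⟩ := (IntermediateField.mem_adjoin_simple_iff F g).mp
    (by rw [hgen]; exact IntermediateField.mem_top)
  by_cases hs0 : s₀ = 0
  · rw [hrep, hs0, map_zero, div_zero]
    exact Subalgebra.zero_mem _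
  · rw [hrep]
    refine Stmt13.mem_laurent hytr s₀.natDegree s₀ p₀ hs0 le_rfl ?_
    intro q hqm hqirr hqX
    rw [← hrep]
    exact Stmt13.no_pole DF hFadd hFmul DE hEadd hEmul hcompat hytr hgen hconst ha hy'
      hqm hqirr hqX g hg
end
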